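/- arXiv:1912.07042 — 6 statements merged into one kernel-verified Lean document; each statement's English description precedes it below -/
import Mathlib

section
/- Copycat property for reconfigurable semantics: let ρ : γ_0 →_R γ_1 →_R ⋯ →_R γ_s be a reconfigurable execution of a broadcast protocol B, with last configuration γ_s = (N, E, L). Then for every state q in the image of L and every node n^q ∈ N with L(n^q) = q, there exist t ∈ ℕ and a reconfigurable execution ρ' : γ'_0 →_R ⋯ →_R γ'_t with last configuration γ'_t = (N', E', L') such that |N'| = |N| + 1, there is an injection ι : N → N' with L'(ι(n)) = L(n) for every n ∈ N, and the extra node n_f ∈ N' \ ι(N) satisfies L'(n_f) = q and a_{ρ'}(n_f) = a_ρ(n^q). -/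
/-- A broadcast protocol over finite state set `Q` and finite message alphabet `M`.
`I` is the set of initial states, `br q m q'` means `(q, !!m, q') ∈ Δ` (a broadcast
transition) and `rcv q m q'` means `(q, ??m, q') ∈ Δ` (a reception transition).
The protocol is complete for receptions. -/
structure BroadcastProtocol (Q M : Type) [Fintype Q] [DecidableEq Q] [Fintype M] where
  I : Finset Q
  br : Q → M → Q → Prop
  rcv : Q → M → Q → Prop
  complete : ∀ q m, ∃ q', rcv q m q'

section Execs
variable {Q M : Type} [Fintype Q] [DecidableEq Q] [Fintype M]

/-- A reconfigurable execution of length `r` over the finite node type `ν`: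
`lab i v` is the state of node `v` in the `i`-th configuration, `edges i` is the
(symmetric, irreflexive) communication topology of the `i`-th configuration,
and in the `i`-th step node `sender i` broadcasts message `msg i` to its
neighbours; the topology may change arbitrarily at each step. -/
structure RExec (P : BroadcastProtocol Q M) (ν : Type) [Fintype ν] [DecidableEq ν]
    (r : ℕ) where
  lab : Fin (r + 1) → ν → Q
  edges : Fin (r + 1) → ν → ν → Prop
  edges_symm : ∀ i, Symmetric (edges i)
  edges_irrefl : ∀ i, Irreflexive (edges i)
  sender : Fin r → ν
  msg : Fin r → M
  init : ∀ v, lab 0 v ∈ P.I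
  step_br : ∀ i : Fin r, P.br (lab i.castSucc (sender i)) (msg i) (lab i.succ (sender i))
  step_rcv : ∀ i : Fin r, ∀ v, v ≠ sender i →
    (edges i.castSucc (sender i) v → P.rcv (lab i.castSucc v) (msg i) (lab i.succ v)) ∧
    (¬ edges i.castSucc (sender i) v → lab i.succ v = lab i.castSucc v)

namespace RExec

variable {P : BroadcastProtocol Q M} {ν : Type} [Fintype ν] [DecidableEq ν] {r : ℕ}

/-- Labelling of the last configuration. -/
def lastLab (ρ : RExec P ν r) : ν → Q := ρ.lab (Fin.last r)

/-- The execution covers `F` if a node of the last configuration is labelled in `F`. -/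
def Covers (ρ : RExec P ν r) (F : Set Q) : Prop := ∃ v, ρ.lastLab v ∈ F

/-- The active length of node `v`: the number of steps in which `v` broadcasts. -/
def activeLen (ρ : RExec P ν r) (v : ν) : ℕ :=
  (Finset.univ.filter fun i : Fin r => ρ.sender i = v).card

end RExec

end Execs

/-! The extra node `none` is a twin of `nq` replaying `ρ` step by step. When another node
broadcasts, `none` is given the neighbourhood of `nq` and so receives exactly what `nq` receives.
When `nq` broadcasts, `none` first performs the same broadcast alone (the topology may be changed
freely), and then `nq` broadcasts while `none`, being its twin and not its neighbour, stays put.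
Hence `none` ends in the state of `nq` and broadcasts exactly as often. -/

variable {Q M : Type} [Fintype Q] [DecidableEq Q] [Fintype M] {ν : Type}

structure BroadcastProtocol.IsStep (P : BroadcastProtocol Q M) (L : ν → Q) (s : ν) (m : M)
    (E : ν → ν → Prop) (L' : ν → Q) : Prop where
  br : P.br (L s) m (L' s)
  rcv : ∀ v, v ≠ s → (E s v → P.rcv (L v) m (L' v)) ∧ (¬ E s v → L' v = L v)

def twinEdges (E : ν → ν → Prop) (n : ν) : Option ν → Option ν → Prop
  | some a, some b => E a b
  | some a, none => E a n
  | none, some b => E n b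
  | none, none => False

lemma twinEdges_symmetric {E : ν → ν → Prop} (hE : Symmetric E) (n : ν) :
    Symmetric (twinEdges E n) := by
  rintro (_ | a) (_ | b) h <;> first | exact h.elim | exact hE h

lemma twinEdges_irreflexive {E : ν → ν → Prop} (hE : Irreflexive E) (n : ν) :
    Irreflexive (twinEdges E n) := by
  rintro (_ | a) h
  exacts [h, hE a h]

namespace BroadcastProtocol.IsStep

variable {P : BroadcastProtocol Q M} {L L' : ν → Q} {s n : ν} {m : M} {E : ν → ν → Prop}

lemma twin_of_ne (h : P.IsStep L s m E L') (hsn : s ≠ n) :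
    P.IsStep (Option.elim' (L n) L) (some s) m (twinEdges E n) (Option.elim' (L' n) L') := by
  refine ⟨h.br, ?_⟩
  rintro (_ | v) hv
  · exact h.rcv n hsn.symm
  · exact h.rcv v (fun hvs => hv (congrArg some hvs))

lemma extra_alone {a c : Q} (L : ν → Q) (hbr : P.br a m c) :
    P.IsStep (Option.elim' a L) none m (fun _ _ => False) (Option.elim' c L) := by
  refine ⟨hbr, ?_⟩
  rintro (_ | v) hv
  exacts [absurd rfl hv, ⟨False.elim, fun _ => rfl⟩]

/-- By irreflexivity the twin is not a neighbour of `n`, so it stays put. -/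
lemma twin_self (h : P.IsStep L n m E L') (hE : Irreflexive E) :
    P.IsStep (Option.elim' (L' n) L) (some n) m (twinEdges E n) (Option.elim' (L' n) L') := by
  refine ⟨h.br, ?_⟩
  rintro (_ | v) hv
  · exact ⟨fun hnn => (hE n hnn).elim, fun _ => rfl⟩
  · exact h.rcv v (fun hvn => hv (congrArg some hvn))

end BroadcastProtocol.IsStep

namespace RExec

variable {P : BroadcastProtocol Q M} [Fintype ν] [DecidableEq ν] {r : ℕ}

def ofInit (L : ν → Q) (hL : ∀ v, L v ∈ P.I) : RExec P ν 0 where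
  lab _ := L
  edges _ _ _ := False
  edges_symm _ _ _ h := h
  edges_irrefl _ _ h := h
  sender := Fin.elim0
  msg := Fin.elim0
  init := hL
  step_br i := i.elim0
  step_rcv i := i.elim0

@[simp] lemma lastLab_ofInit (L : ν → Q) (hL : ∀ v, L v ∈ P.I) :
    (ofInit (P := P) L hL).lastLab = L := rfl

@[simp] lemma activeLen_ofInit (L : ν → Q) (hL : ∀ v, L v ∈ P.I) (v : ν) :
    (ofInit (P := P) L hL).activeLen v = 0 := by
  simp [activeLen]

/-- The topology of the last configuration of `ρ` is replaced by `E`, the one of the new step. -/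
def snoc (ρ : RExec P ν r) (s : ν) (m : M) (E : ν → ν → Prop) (hsymm : Symmetric E)
    (hirr : Irreflexive E) (L' : ν → Q) (h : P.IsStep ρ.lastLab s m E L') :
    RExec P ν (r + 1) where
  lab := Fin.snoc ρ.lab L'
  edges := Fin.snoc (Fin.snoc (fun i : Fin r => ρ.edges i.castSucc) E) E
  edges_symm := by
    simp only [Fin.forall_fin_succ', Fin.snoc_castSucc, Fin.snoc_last]
    exact ⟨⟨fun i => ρ.edges_symm _, hsymm⟩, hsymm⟩
  edges_irrefl := by
    simp only [Fin.forall_fin_succ', Fin.snoc_castSucc, Fin.snoc_last]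
    exact ⟨⟨fun i => ρ.edges_irrefl _, hirr⟩, hirr⟩
  sender := Fin.snoc ρ.sender s
  msg := Fin.snoc ρ.msg m
  init v := by
    rw [← Fin.castSucc_zero, Fin.snoc_castSucc]
    exact ρ.init v
  step_br := by
    simp only [Fin.forall_fin_succ', Fin.snoc_castSucc, Fin.snoc_last, Fin.succ_last,
      Fin.succ_castSucc]
    exact ⟨ρ.step_br, h.br⟩
  step_rcv := by
    simp only [Fin.forall_fin_succ', Fin.snoc_castSucc, Fin.snoc_last, Fin.succ_last,
      Fin.succ_castSucc]
    exact ⟨ρ.step_rcv, h.rcv⟩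

@[simp] lemma lastLab_snoc (ρ : RExec P ν r) (s m E hsymm hirr L' h) :
    (ρ.snoc s m E hsymm hirr L' h).lastLab = L' := by
  simp [lastLab, snoc]

lemma activeLen_snoc (ρ : RExec P ν r) (s m E hsymm hirr L' h) (v : ν) :
    (ρ.snoc s m E hsymm hirr L' h).activeLen v = ρ.activeLen v + if s = v then 1 else 0 := by
  simp only [activeLen, Finset.card_filter, Fin.sum_univ_castSucc]
  simp [snoc]

def dropLast (ρ : RExec P ν (r + 1)) : RExec P ν r where
  lab i := ρ.lab i.castSucc
  edges i := ρ.edges i.castSucc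
  edges_symm _ := ρ.edges_symm _
  edges_irrefl _ := ρ.edges_irrefl _
  sender i := ρ.sender i.castSucc
  msg i := ρ.msg i.castSucc
  init := ρ.init
  step_br i := by simpa [← Fin.succ_castSucc] using ρ.step_br i.castSucc
  step_rcv i := by simpa [← Fin.succ_castSucc] using ρ.step_rcv i.castSucc

lemma isStep_last (ρ : RExec P ν (r + 1)) :
    P.IsStep ρ.dropLast.lastLab (ρ.sender (Fin.last r)) (ρ.msg (Fin.last r))
      (ρ.edges (Fin.last r).castSucc) ρ.lastLab :=
  ⟨ρ.step_br (Fin.last r), ρ.step_rcv (Fin.last r)⟩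

lemma activeLen_eq_dropLast (ρ : RExec P ν (r + 1)) (v : ν) :
    ρ.activeLen v = ρ.dropLast.activeLen v + if ρ.sender (Fin.last r) = v then 1 else 0 := by
  simp only [activeLen, Finset.card_filter, Fin.sum_univ_castSucc]
  rfl

theorem exists_copycat (ρ : RExec P ν r) (n : ν) :
    ∃ (t : ℕ) (ρ' : RExec P (Option ν) t),
      ρ'.lastLab = Option.elim' (ρ.lastLab n) ρ.lastLab ∧ ρ'.activeLen none = ρ.activeLen n := by
  induction r with
  | zero =>
    refine ⟨0, ofInit (Option.elim' (ρ.lastLab n) ρ.lastLab) ?_, lastLab_ofInit ..,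
      activeLen_ofInit ..⟩
    rintro (_ | v) <;> exact ρ.init _
  | succ r ih =>
    obtain ⟨t, ρ', hlab, hact⟩ := ih ρ.dropLast
    have hstep := ρ.isStep_last
    set E := ρ.edges (Fin.last r).castSucc
    have hsymm : Symmetric (twinEdges E n) := twinEdges_symmetric (ρ.edges_symm _) n
    have hirr : Irreflexive (twinEdges E n) := twinEdges_irreflexive (ρ.edges_irrefl _) n
    by_cases hs : ρ.sender (Fin.last r) = n
    · rw [hs] at hstep
      have h₁ := hlab ▸ BroadcastProtocol.IsStep.extra_alone ρ.dropLast.lastLab hstep.br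
      obtain ⟨ρ₁, hlab₁, hact₁⟩ : ∃ ρ₁ : RExec P (Option ν) (t + 1),
          ρ₁.lastLab = Option.elim' (ρ.lastLab n) ρ.dropLast.lastLab ∧
            ρ₁.activeLen none = ρ.activeLen n :=
        ⟨ρ'.snoc none _ _ (show Symmetric _ from fun _ _ h => h)
          (show Irreflexive _ from fun _ h => h) _ h₁, lastLab_snoc ..,
          by rw [activeLen_snoc, hact, activeLen_eq_dropLast ρ n, if_pos rfl, if_pos hs]⟩
      refine ⟨t + 1 + 1, ρ₁.snoc _ _ _ hsymm hirr _
        (hlab₁ ▸ hstep.twin_self (ρ.edges_irrefl _)), lastLab_snoc .., ?_⟩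
      simp [activeLen_snoc, hact₁]
    · refine ⟨t + 1, ρ'.snoc _ _ _ hsymm hirr _ (hlab ▸ hstep.twin_of_ne hs), lastLab_snoc .., ?_⟩
      simp [activeLen_snoc, activeLen_eq_dropLast ρ n, hact, hs]

end RExec

/-- **Copycat property for reconfigurable semantics.** Given a reconfigurable
execution `ρ` of length `r` whose last configuration labels the node `nq` with the
state `q`, there is a reconfigurable execution `ρ'` of some length `t` over the node
set `Option ν` (which has one more node), such that the injection `some : ν → Option ν`
preserves the final labels, the extra node `none` ends labelled `q`, and the active
length of the extra node in `ρ'` equals the active length of `nq` in `ρ`. -/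
theorem copycat_reconfigurable
    {Q M : Type} [Fintype Q] [DecidableEq Q] [Fintype M]
    (P : BroadcastProtocol Q M) (ν : Type) [Fintype ν] [DecidableEq ν]
    (r : ℕ) (ρ : RExec P ν r) (q : Q) (nq : ν) (hnq : ρ.lastLab nq = q) :
    ∃ (t : ℕ) (ρ' : RExec P (Option ν) t),
      Fintype.card (Option ν) = Fintype.card ν + 1 ∧
      Function.Injective (some : ν → Option ν) ∧
      (∀ n : ν, ρ'.lastLab (some n) = ρ.lastLab n) ∧
      ρ'.lastLab none = q ∧
      ρ'.activeLen none = ρ.activeLen nq := by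
  obtain ⟨t, ρ', hlab, hact⟩ := ρ.exists_copycat nq
  refine ⟨t, ρ', Fintype.card_option, Option.some_injective ν, fun n => ?_, ?_, hact⟩
  · rw [hlab, Option.elim'_some]
  · rw [hlab, Option.elim'_none, hnq]
end

section
/- Upper bounds on cutoff and covering length for reconfigurable networks: let B = (Q, I, Σ, Δ) be a broadcast protocol and F ⊆ Q. If there exists a reconfigurable execution of B covering F, then there exists a reconfigurable execution ρ covering F with size |ρ| ≤ 2|Q| and length ‖ρ‖ ≤ 2|Q|². -/
/-!
Call a finite set `S` of states *derived* if its elements can be listed so that each one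
is reached from initial states or earlier ones by one broadcast, or by one reception of a
message that some initial or earlier state can broadcast. A derived set of maximal size is
closed under this rule, so every state of every execution lies in it or is initial, and it
has at most `|Q|` elements.

Conversely, peel off the last state `q` of a derived set. Any placement of `n` nodes into the
set is reached from a placement into the earlier states: the nodes destined for `q` wait in
the state `p` that `q` comes from, and then either broadcast one at a time (at most `n`
steps), or all receive together from one extra node waiting in the broadcasting state
(one step). With `s` states this uses at most `s` extra nodes and `s (n + s)` steps, and one
target node gives `1 + s ≤ 2|Q|` nodes and `s (1 + s) ≤ 2|Q|²` steps.
-/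

section
variable {Q M : Type} [Fintype Q] [DecidableEq Q] [Fintype M] {P : BroadcastProtocol Q M}
  {ν : Type} [Fintype ν] [DecidableEq ν] {r : ℕ}

namespace BroadcastProtocol

variable (P) in
def DerivableFrom (A : Set Q) (q : Q) : Prop :=
  (∃ p ∈ A, ∃ m, P.br p m q) ∨ ∃ p ∈ A, ∃ e ∈ A, ∃ m w, P.br e m w ∧ P.rcv p m q

theorem DerivableFrom.mono {A B : Set Q} {q : Q} (hAB : A ⊆ B) :
    P.DerivableFrom A q → P.DerivableFrom B q
  | .inl ⟨p, hp, m, hpq⟩ => .inl ⟨p, hAB hp, m, hpq⟩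
  | .inr ⟨p, hp, e, he, m, w, hew, hpq⟩ => .inr ⟨p, hAB hp, e, hAB he, m, w, hew, hpq⟩

variable (P) in
inductive Derived : Finset Q → Prop
  | empty : Derived ∅
  | insert {S : Finset Q} {q : Q} :
      Derived S → q ∉ S → P.DerivableFrom (↑S ∪ ↑P.I) q → Derived (insert q S)

variable (P) in
theorem exists_derived_closed :
    ∃ S, P.Derived S ∧ ∀ q, P.DerivableFrom (↑S ∪ ↑P.I) q → q ∈ S := by
  classical
  obtain ⟨S, hS, hmax⟩ := (Finset.univ.filter P.Derived).exists_max_image Finset.card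
    ⟨∅, Finset.mem_filter.2 ⟨Finset.mem_univ _, .empty⟩⟩
  refine ⟨S, (Finset.mem_filter.1 hS).2, fun q hq => ?_⟩
  by_contra hqS
  have := hmax _ (Finset.mem_filter.2
    ⟨Finset.mem_univ _, (Finset.mem_filter.1 hS).2.insert hqS hq⟩)
  rw [Finset.card_insert_of_notMem hqS] at this
  omega

end BroadcastProtocol

namespace RExec

theorem exists_lastLab_eq_of_init (L : ν → Q) (hL : ∀ v, L v ∈ P.I) :
    ∃ ρ : RExec P ν 0, ρ.lastLab = L :=
  ⟨{ lab := fun _ => L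
     edges := fun _ _ _ => False
     edges_symm := fun _ _ _ h => h
     edges_irrefl := fun _ _ h => h
     sender := Fin.elim0
     msg := Fin.elim0
     init := hL
     step_br := fun i => i.elim0
     step_rcv := fun i => i.elim0 }, rfl⟩

theorem exists_snoc (ρ : RExec P ν r) (u : ν) (m : M) (R : ν → Prop) (L : ν → Q)
    (hu : P.br (ρ.lastLab u) m (L u))
    (hR : ∀ v ≠ u, R v → P.rcv (ρ.lastLab v) m (L v))
    (hidle : ∀ v ≠ u, ¬ R v → L v = ρ.lastLab v) :
    ∃ ρ' : RExec P ν (r + 1), ρ'.lastLab = L := by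
  let E : ν → ν → Prop := fun a b => a ≠ b ∧ (a = u ∧ R b ∨ b = u ∧ R a)
  -- The steps of `ρ` never read the topology of its last configuration, so it is replaced by `E`.
  let edges : Fin (r + 1 + 1) → ν → ν → Prop :=
    Fin.snoc (Function.update ρ.edges (Fin.last r) E) E
  have hedges : ∀ i, edges i = E ∨ ∃ j, edges i = ρ.edges j := by
    intro i
    induction i using Fin.lastCases with
    | last => exact .inl (Fin.snoc_last ..)
    | cast i =>
      simp only [edges, Fin.snoc_castSucc, Function.update_apply]
      split_ifs
      exacts [.inl rfl, .inr ⟨i, rfl⟩]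
  refine ⟨{
    lab := Fin.snoc ρ.lab L
    edges := edges
    edges_symm := fun i => by
      rcases hedges i with h | ⟨j, h⟩ <;> rw [h]
      exacts [fun _ _ ⟨hab, h⟩ => ⟨hab.symm, h.symm⟩, ρ.edges_symm j]
    edges_irrefl := fun i => by
      rcases hedges i with h | ⟨j, h⟩ <;> rw [h]
      exacts [fun _ ⟨h, _⟩ => h rfl, ρ.edges_irrefl j]
    sender := Fin.snoc ρ.sender u
    msg := Fin.snoc ρ.msg m
    init := fun v => by
      rw [show (0 : Fin (r + 1 + 1)) = Fin.castSucc 0 from rfl, Fin.snoc_castSucc]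
      exact ρ.init v
    step_br := fun i => ?_
    step_rcv := fun i => ?_ }, by simp only [lastLab, Fin.snoc_last]⟩
  · induction i using Fin.lastCases with
    | last =>
      simp only [Fin.snoc_last, Fin.succ_last, Fin.snoc_castSucc]
      exact hu
    | cast i =>
      simp only [Fin.snoc_castSucc, Fin.succ_castSucc]
      exact ρ.step_br i
  · induction i using Fin.lastCases with
    | last =>
      intro v hv
      simp only [Fin.snoc_last] at hv
      simp only [Fin.snoc_last, Fin.succ_last, Fin.snoc_castSucc, edges,
        Function.update_self]
      refine ⟨fun ⟨_, h⟩ => hR v hv (h.resolve_right fun h' => hv h'.1).2,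
        fun h => hidle v hv fun hv' => h ⟨Ne.symm hv, Or.inl ⟨rfl, hv'⟩⟩⟩
    | cast i =>
      intro v hv
      simp only [Fin.snoc_castSucc] at hv
      simp only [Fin.snoc_castSucc, Fin.succ_castSucc, edges,
        Function.update_of_ne (Fin.castSucc_ne_last i)]
      exact ρ.step_rcv i v hv

theorem exists_broadcast_each (ρ : RExec P ν r) {a b : Q} {m : M} (hab : P.br a m b)
    (T : Finset ν) (hT : ∀ v ∈ T, ρ.lastLab v = a) :
    ∃ r' ≤ r + T.card, ∃ ρ' : RExec P ν r',
      ρ'.lastLab = fun v => if v ∈ T then b else ρ.lastLab v := by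
  induction T using Finset.induction_on with
  | empty => exact ⟨r, by simp, ρ, by simp⟩
  | insert u T hu ih =>
    obtain ⟨r', hr', ρ', hρ'⟩ := ih fun v hv => hT v (Finset.mem_insert_of_mem hv)
    obtain ⟨ρ'', hρ''⟩ := ρ'.exists_snoc u m (fun _ => False)
      (fun v => if v ∈ insert u T then b else ρ.lastLab v)
      (by simpa [hρ', hu, hT u (Finset.mem_insert_self u T)] using hab)
      (fun _ _ h => h.elim) (fun v hvu _ => by simp [hρ', hvu])
    exact ⟨r' + 1, by rw [Finset.card_insert_of_notMem hu]; omega, ρ'', hρ''⟩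

theorem lab_succ_eq_or_derivableFrom (ρ : RExec P ν r) (i : Fin r) (v : ν) :
    ρ.lab i.succ v = ρ.lab i.castSucc v ∨
      P.DerivableFrom (Set.range (ρ.lab i.castSucc)) (ρ.lab i.succ v) := by
  by_cases hv : v = ρ.sender i
  · subst hv
    exact .inr (.inl ⟨_, ⟨_, rfl⟩, _, ρ.step_br i⟩)
  · obtain ⟨hrcv, hidle⟩ := ρ.step_rcv i v hv
    by_cases he : ρ.edges i.castSucc (ρ.sender i) v
    · exact .inr (.inr ⟨_, ⟨v, rfl⟩, _, ⟨_, rfl⟩, _, _, ρ.step_br i, hrcv he⟩)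
    · exact .inl (hidle he)

theorem lab_mem_of_closed {A : Set Q} (hI : ∀ q ∈ P.I, q ∈ A)
    (hA : ∀ q, P.DerivableFrom A q → q ∈ A) (ρ : RExec P ν r) (i : Fin (r + 1)) (v : ν) :
    ρ.lab i v ∈ A := by
  induction i using Fin.induction generalizing v with
  | zero => exact hI _ (ρ.init v)
  | succ i ih =>
    rcases ρ.lab_succ_eq_or_derivableFrom i v with h | h
    · exact h ▸ ih v
    · exact hA _ (h.mono (Set.range_subset_iff.2 ih))

end RExec

namespace BroadcastProtocol

variable (P) in
def Realizable (s : ℕ) (A : Set Q) : Prop :=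
  ∀ (ν : Type) [Fintype ν] [DecidableEq ν] (L : ν → Q), (∀ v, L v ∈ A) →
    ∃ (k r : ℕ) (ρ : RExec P (Fin k) r) (ι : ν ↪ Fin k),
      k ≤ Fintype.card ν + s ∧ r ≤ s * (Fintype.card ν + s) ∧ ∀ v, ρ.lastLab (ι v) = L v

theorem realizable_init : P.Realizable 0 P.I := by
  intro ν _ _ L hL
  let e := Fintype.equivFin ν
  obtain ⟨ρ, hρ⟩ := RExec.exists_lastLab_eq_of_init (P := P) (L ∘ e.symm) fun _ => hL _
  exact ⟨_, 0, ρ, e.toEmbedding, by simp, by simp, fun v => by simp [hρ]⟩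

theorem Realizable.insert_of_br {s : ℕ} {A : Set Q} {p q : Q} {m : M}
    (h : P.Realizable s A) (hp : p ∈ A) (hpq : P.br p m q) :
    P.Realizable (s + 1) (insert q A) := by
  intro ν _ _ L hL
  obtain ⟨k, r, ρ, ι, hk, hr, hρ⟩ := h ν (fun v => if L v = q then p else L v) fun v => by
    split_ifs with hv
    exacts [hp, (hL v).resolve_left hv]
  obtain ⟨r', hr', ρ', hρ'⟩ :=
    ρ.exists_broadcast_each hpq ((Finset.univ.filter (L · = q)).map ι) (by
      simp only [Finset.mem_map, Finset.mem_filter]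
      rintro _ ⟨v, ⟨-, hv⟩, rfl⟩
      simp [hρ, hv])
  refine ⟨k, r', ρ', ι, by omega, ?_, fun v => ?_⟩
  · have := (Finset.univ.filter (L · = q)).card_le_univ
    rw [Finset.card_map] at hr'
    nlinarith
  · by_cases hv : L v = q <;> simp [hρ', hρ, hv]

theorem Realizable.insert_of_rcv {s : ℕ} {A : Set Q} {p q e w : Q} {m : M}
    (h : P.Realizable s A) (hp : p ∈ A) (he : e ∈ A) (hew : P.br e m w)
    (hpq : P.rcv p m q) : P.Realizable (s + 1) (insert q A) := by
  intro ν _ _ L hL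
  obtain ⟨k, r, ρ, ι, hk, hr, hρ⟩ :=
    h (Option ν) (fun o => o.elim e fun v => if L v = q then p else L v) fun o => by
      rcases o with _ | v
      · exact he
      · dsimp only [Option.elim]
        split_ifs with hv
        exacts [hp, (hL v).resolve_left hv]
  let u := ι none
  let R : Fin k → Prop := fun x => ∃ v, ι (some v) = x ∧ L v = q
  obtain ⟨ρ', hρ'⟩ := ρ.exists_snoc u m R
    (fun x => if x = u then w else if R x then q else ρ.lastLab x)
    (by simpa [u, hρ] using hew)
    (fun x hx ⟨v, hv, hvq⟩ => by
      subst hv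
      simpa [hx, R, hρ, hvq] using hpq)
    (fun x hx hR => by simp [hx, hR])
  refine ⟨k, r + 1, ρ', Function.Embedding.some.trans ι, ?_, ?_, fun v => ?_⟩
  · simp only [Fintype.card_option] at hk; omega
  · simp only [Fintype.card_option] at hr; nlinarith
  · by_cases hv : L v = q <;> simp [hρ', hρ, hv, R, u]

theorem Derived.realizable {S : Finset Q} (hS : P.Derived S) :
    P.Realizable S.card (↑S ∪ ↑P.I) := by
  induction hS with
  | empty => simpa using realizable_init
  | insert _ hq hder ih =>
    rw [Finset.card_insert_of_notMem hq, Finset.coe_insert, Set.insert_union]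
    rcases hder with ⟨p, hp, m, hpq⟩ | ⟨p, hp, e, he, m, w, hew, hpq⟩
    exacts [ih.insert_of_br hp hpq, ih.insert_of_rcv hp he hew hpq]

end BroadcastProtocol

end

/-- **Upper bounds on cutoff and covering length for reconfigurable networks.**
If some reconfigurable execution of `P` covers `F`, then there is a reconfigurable
execution covering `F` with at most `2|Q|` nodes and length at most `2|Q|²`. -/
theorem upper_bounds_reconfigurable
    {Q M : Type} [Fintype Q] [DecidableEq Q] [Fintype M] (P : BroadcastProtocol Q M)
    (F : Set Q) (ν : Type) [Fintype ν] [DecidableEq ν]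
    (r₀ : ℕ) (ρ₀ : RExec P ν r₀) (h : ρ₀.Covers F) :
    ∃ (k r : ℕ) (ρ : RExec P (Fin k) r), ρ.Covers F ∧
      k ≤ 2 * Fintype.card Q ∧ r ≤ 2 * Fintype.card Q ^ 2 := by
  obtain ⟨v, hv⟩ := h
  obtain ⟨S, hS, hclosed⟩ := P.exists_derived_closed
  have hmem : ρ₀.lastLab v ∈ (↑S ∪ ↑P.I : Set Q) :=
    ρ₀.lab_mem_of_closed (fun q hq => .inr hq) (fun q hq => .inl (hclosed q hq)) _ v
  obtain ⟨k, r, ρ, ι, hk, hr, hρ⟩ := hS.realizable Unit (fun _ => ρ₀.lastLab v) fun _ => hmem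
  have hSQ : S.card ≤ Fintype.card Q := S.card_le_univ
  have hQ : 0 < Fintype.card Q := Fintype.card_pos_iff.2 ⟨ρ₀.lastLab v⟩
  rw [Fintype.card_unit] at hk hr
  refine ⟨k, r, ρ, ⟨ι (), (hρ ()).symm ▸ hv⟩, by omega, ?_⟩
  calc r ≤ S.card * (1 + S.card) := hr
    _ ≤ 2 * Fintype.card Q ^ 2 := by nlinarith
end

section
/- Correctness of the saturation construction for lossy networks: for every broadcast protocol B = (Q, I, Σ, Δ) and every state q ∈ Q, q belongs to the saturation set S(B) if and only if there exists a lossy execution of B covering {q}. Consequently, for any F ⊆ Q, there exists a lossy execution covering F if and only if F ∩ S(B) ≠ ∅. -/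
section Execs
variable {Q M : Type} [Fintype Q] [DecidableEq Q] [Fintype M]

/-- A lossy execution of length `r` over the finite node type `ν`: the communication
topology `E` is fixed throughout, and in the `i`-th step node `sender i` broadcasts
message `msg i`, which is lost (reaching no node) iff `lost i = true`. -/
structure LExec (P : BroadcastProtocol Q M) (ν : Type) [Fintype ν] [DecidableEq ν]
    (r : ℕ) where
  lab : Fin (r + 1) → ν → Q
  E : ν → ν → Prop
  E_symm : Symmetric E
  E_irrefl : Irreflexive E
  sender : Fin r → ν
  msg : Fin r → M
  lost : Fin r → Bool
  init : ∀ v, lab 0 v ∈ P.I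
  step_br : ∀ i : Fin r, P.br (lab i.castSucc (sender i)) (msg i) (lab i.succ (sender i))
  step_lost : ∀ i : Fin r, lost i = true → ∀ v, v ≠ sender i →
    lab i.succ v = lab i.castSucc v
  step_real : ∀ i : Fin r, lost i = false → ∀ v, v ≠ sender i →
    (E (sender i) v → P.rcv (lab i.castSucc v) (msg i) (lab i.succ v)) ∧
    (¬ E (sender i) v → lab i.succ v = lab i.castSucc v)

namespace LExec

variable {P : BroadcastProtocol Q M} {ν : Type} [Fintype ν] [DecidableEq ν] {r : ℕ}

/-- Labelling of the last configuration. -/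
def lastLab (ρ : LExec P ν r) : ν → Q := ρ.lab (Fin.last r)

/-- The execution covers `F` if a node of the last configuration is labelled in `F`. -/
def Covers (ρ : LExec P ν r) (F : Set Q) : Prop := ∃ v, ρ.lastLab v ∈ F

/-- The active length of node `v`: the number of broadcasts (lost or not) of `v`. -/
def activeLen (ρ : LExec P ν r) (v : ν) : ℕ :=
  (Finset.univ.filter fun i : Fin r => ρ.sender i = v).card

/-- The real active length of node `v`: the number of non-lost broadcasts of `v`. -/
def realActiveLen (ρ : LExec P ν r) (v : ν) : ℕ :=
  (Finset.univ.filter fun i : Fin r => ρ.sender i = v ∧ ρ.lost i = false).card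

end LExec

end Execs
/-- The saturation set `S(B)`: the least subset of `Q` containing `I` and closed
under the broadcast and reception rules. -/
inductive Sat {Q M : Type} [Fintype Q] [DecidableEq Q] [Fintype M]
    (P : BroadcastProtocol Q M) : Q → Prop
  | base (q : Q) : q ∈ P.I → Sat P q
  | broadcast (q₁ : Q) (m : M) (q₂ : Q) : Sat P q₁ → P.br q₁ m q₂ → Sat P q₂
  | reception (q₁ : Q) (m : M) (q₂ p₁ p₂ : Q) :
      Sat P q₁ → Sat P q₂ → Sat P p₁ → P.br q₁ m q₂ → P.rcv p₁ m p₂ → Sat P p₂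

/-!
Soundness: every label of a lossy execution is saturated, by induction along the execution;
a broadcasting node applies rule (i) and each of its receivers applies rule (ii).

Completeness: by induction on `S(B)` we build, for every saturated `q`, a lossy run in which a
distinguished node ends in `q` having made only lost broadcasts ("quiet"). For rule (ii), the runs
for `q₁` and `q₁'` are executed one after the other on the disjoint union of their networks, joined
by a single edge between their distinguished nodes. Since both of these are quiet, the edge carries
nothing until the final step, in which the first one broadcasts `m` for real and the second receives
it; the other neighbours of the sender receive `m` in any way, by completeness of receptions.
-/

open Relation

section SaturationCorrectness

variable {Q M : Type} [Fintype Q] [DecidableEq Q] [Fintype M] {P : BroadcastProtocol Q M}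

namespace LExec

variable {ν : Type} [Fintype ν] [DecidableEq ν] {r : ℕ}

theorem sat_lab (ρ : LExec P ν r) (i : Fin (r + 1)) (v : ν) : Sat P (ρ.lab i v) := by
  induction i using Fin.induction generalizing v with
  | zero => exact .base _ (ρ.init v)
  | succ i ih =>
    have hsender : Sat P (ρ.lab i.succ (ρ.sender i)) :=
      .broadcast _ _ _ (ih _) (ρ.step_br i)
    by_cases hv : v = ρ.sender i
    · exact hv ▸ hsender
    cases hl : ρ.lost i with
    | true => exact ρ.step_lost i hl v hv ▸ ih v
    | false =>
      by_cases he : ρ.E (ρ.sender i) v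
      · exact .reception _ _ _ _ _ (ih _) hsender (ih v) (ρ.step_br i)
          ((ρ.step_real i hl v hv).1 he)
      · exact (ρ.step_real i hl v hv).2 he ▸ ih v

def snoc (ρ : LExec P ν r) (c : ν → Q) (s : ν) (m : M) (l : Bool)
    (hbr : P.br (ρ.lastLab s) m (c s))
    (hlost : l = true → ∀ v, v ≠ s → c v = ρ.lastLab v)
    (hreal : l = false → ∀ v, v ≠ s →
      (ρ.E s v → P.rcv (ρ.lastLab v) m (c v)) ∧ (¬ ρ.E s v → c v = ρ.lastLab v)) :
    LExec P ν (r + 1) where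
  lab := Fin.snoc ρ.lab c
  E := ρ.E
  E_symm := ρ.E_symm
  E_irrefl := ρ.E_irrefl
  sender := Fin.snoc ρ.sender s
  msg := Fin.snoc ρ.msg m
  lost := Fin.snoc ρ.lost l
  init v := by
    rw [← Fin.castSucc_zero, Fin.snoc_castSucc]
    exact ρ.init v
  step_br i := by
    cases i using Fin.lastCases with
    | last => simpa [lastLab] using hbr
    | cast j => simp only [Fin.succ_castSucc, Fin.snoc_castSucc]; exact ρ.step_br j
  step_lost i := by
    cases i using Fin.lastCases with
    | last => simpa [lastLab] using hlost
    | cast j => simp only [Fin.succ_castSucc, Fin.snoc_castSucc]; exact ρ.step_lost j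
  step_real i := by
    cases i using Fin.lastCases with
    | last => simpa [lastLab] using hreal
    | cast j => simp only [Fin.succ_castSucc, Fin.snoc_castSucc]; exact ρ.step_real j

@[simp]
theorem lastLab_snoc (ρ : LExec P ν r) (c : ν → Q) (s : ν) (m : M) (l : Bool) hbr hlost hreal :
    (ρ.snoc c s m l hbr hlost hreal).lastLab = c := by
  simp [snoc, lastLab]

end LExec

def LossyStep (P : BroadcastProtocol Q M) {ν : Type} (E : ν → ν → Prop) (quiet : Set ν)
    (c c' : ν → Q) : Prop :=
  ∃ s m, P.br (c s) m (c' s) ∧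
    ((∀ w, w ≠ s → c' w = c w) ∨
      (s ∉ quiet ∧ ∀ w, w ≠ s → (E s w → P.rcv (c w) m (c' w)) ∧ (¬ E s w → c' w = c w)))

theorem exists_lExec_of_reflTransGen_lossyStep {ν : Type} [Fintype ν] [DecidableEq ν]
    {E : ν → ν → Prop} (hsymm : Symmetric E) (hirrefl : Irreflexive E) {quiet : Set ν}
    {c₀ c : ν → Q} (hinit : ∀ v, c₀ v ∈ P.I) (h : ReflTransGen (LossyStep P E quiet) c₀ c) :
    ∃ (r : ℕ) (ρ : LExec P ν r), ρ.E = E ∧ ρ.lastLab = c := by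
  induction h with
  | refl =>
    exact ⟨0, ⟨fun _ => c₀, E, hsymm, hirrefl, Fin.elim0, Fin.elim0, Fin.elim0, hinit,
      fun i => i.elim0, fun i => i.elim0, fun i => i.elim0⟩, rfl, rfl⟩
  | tail _ hstep ih =>
    obtain ⟨r, ρ, rfl, rfl⟩ := ih
    obtain ⟨s, m, hbr, hlost | ⟨-, hreal⟩⟩ := hstep
    · exact ⟨r + 1, ρ.snoc _ s m true hbr (fun _ => hlost) (by simp), rfl, by simp⟩
    · exact ⟨r + 1, ρ.snoc _ s m false hbr (by simp) (fun _ => hreal), rfl, by simp⟩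

theorem LossyStep.comp_equiv {ν ν' : Type} {E : ν → ν → Prop} {quiet : Set ν} {c c' : ν → Q}
    (h : LossyStep P E quiet c c') (e : ν' ≃ ν) :
    LossyStep P (fun x y => E (e x) (e y)) (e.symm '' quiet) (c ∘ e) (c' ∘ e) := by
  have hne {s : ν} {w : ν'} (hw : w ≠ e.symm s) : e w ≠ s := fun h => hw (e.eq_symm_apply.mpr h)
  obtain ⟨s, m, hbr, hlost | ⟨hs, hreal⟩⟩ := h
  · exact ⟨e.symm s, m, by simpa using hbr, .inl fun w hw => hlost _ (hne hw)⟩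
  · refine ⟨e.symm s, m, by simpa using hbr, .inr ⟨?_, fun w hw => by simpa using hreal _ (hne hw)⟩⟩
    rwa [e.symm.injective.mem_set_image]

section Bridge

variable {ν₁ ν₂ : Type}

def bridge (E₁ : ν₁ → ν₁ → Prop) (E₂ : ν₂ → ν₂ → Prop) (a : ν₁) (b : ν₂) :
    ν₁ ⊕ ν₂ → ν₁ ⊕ ν₂ → Prop
  | .inl x, .inl y => E₁ x y
  | .inl x, .inr y => x = a ∧ y = b
  | .inr x, .inl y => x = b ∧ y = a
  | .inr x, .inr y => E₂ x y

variable {E₁ : ν₁ → ν₁ → Prop} {E₂ : ν₂ → ν₂ → Prop} {a : ν₁} {b : ν₂}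

theorem bridge_symmetric (h₁ : Symmetric E₁) (h₂ : Symmetric E₂) :
    Symmetric (bridge E₁ E₂ a b) := by
  rintro (x | x) (y | y) h
  · exact h₁ h
  · exact h.symm
  · exact h.symm
  · exact h₂ h

theorem bridge_irreflexive (h₁ : Irreflexive E₁) (h₂ : Irreflexive E₂) :
    Irreflexive (bridge E₁ E₂ a b) := by
  rintro (x | x)
  · exact h₁ x
  · exact h₂ x

theorem LossyStep.sum_inl {c c' : ν₁ → Q} (h : LossyStep P E₁ {a} c c') (d : ν₂ → Q) :
    LossyStep P (bridge E₁ E₂ a b) {.inr b} (Sum.elim c d) (Sum.elim c' d) := by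
  obtain ⟨s, m, hbr, hlost | ⟨hs, hreal⟩⟩ := h
  · refine ⟨.inl s, m, hbr, .inl ?_⟩
    rintro (w | w) hw
    · exact hlost w (by simpa using hw)
    · rfl
  · refine ⟨.inl s, m, hbr, .inr ⟨by simp, ?_⟩⟩
    rintro (w | w) hw
    · exact hreal w (by simpa using hw)
    · simp_all [bridge]

theorem LossyStep.sum_inr {c c' : ν₂ → Q} (h : LossyStep P E₂ {b} c c') (d : ν₁ → Q) :
    LossyStep P (bridge E₁ E₂ a b) {.inr b} (Sum.elim d c) (Sum.elim d c') := by
  obtain ⟨s, m, hbr, hlost | ⟨hs, hreal⟩⟩ := h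
  · refine ⟨.inr s, m, hbr, .inl ?_⟩
    rintro (w | w) hw
    · rfl
    · exact hlost w (by simpa using hw)
  · refine ⟨.inr s, m, hbr, .inr ⟨by simpa using hs, ?_⟩⟩
    rintro (w | w) hw
    · simp_all [bridge]
    · exact hreal w (by simpa using hw)

noncomputable def receiveFrom (P : BroadcastProtocol Q M) {ν : Type} (E : ν → ν → Prop) (s : ν)
    (m : M) (c : ν → Q) (w : ν) : Q :=
  open Classical in if E s w then (P.complete (c w) m).choose else c w

theorem LossyStep.bridge_broadcast [DecidableEq ν₁] [DecidableEq ν₂] {c₁ : ν₁ → Q}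
    {c₂ : ν₂ → Q} {m : M} {q p : Q} (hbr : P.br (c₁ a) m q) (hrcv : P.rcv (c₂ b) m p) :
    LossyStep P (bridge E₁ E₂ a b) {.inr b} (Sum.elim c₁ c₂)
      (Sum.elim (Function.update (receiveFrom P E₁ a m c₁) a q) (Function.update c₂ b p)) := by
  refine ⟨.inl a, m, by simpa using hbr, .inr ⟨by simp, ?_⟩⟩
  rintro (w | w) hw
  · have hwa : w ≠ a := by rintro rfl; exact hw rfl
    simp only [bridge, Sum.elim_inl, Function.update_of_ne hwa, receiveFrom]
    constructor
    · intro he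
      simpa [he] using (P.complete (c₁ w) m).choose_spec
    · intro he
      simp [he]
  · by_cases hwb : w = b
    · subst hwb
      simpa [bridge] using hrcv
    · simp [bridge, hwb]

end Bridge

structure QuietRun (P : BroadcastProtocol Q M) (ν : Type) (q : Q) where
  E : ν → ν → Prop
  E_symm : Symmetric E
  E_irrefl : Irreflexive E
  init : ν → Q
  last : ν → Q
  node : ν
  init_mem : ∀ v, init v ∈ P.I
  reach : ReflTransGen (LossyStep P E {node}) init last
  last_node : last node = q

namespace QuietRun

variable {ν : Type} {q : Q}

def ofMemInit (v : ν) (hq : q ∈ P.I) : QuietRun P ν q where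
  E _ _ := False
  E_symm _ _ := id
  E_irrefl _ := id
  init _ := q
  last _ := q
  node := v
  init_mem _ := hq
  reach := .refl
  last_node := rfl

def broadcast [DecidableEq ν] {m : M} {q' : Q} (R : QuietRun P ν q) (hbr : P.br q m q') :
    QuietRun P ν q' :=
  { R with
    last := Function.update R.last R.node q'
    reach := R.reach.tail
      ⟨R.node, m, by simpa [R.last_node] using hbr, .inl fun _ hw => Function.update_of_ne hw _ _⟩
    last_node := Function.update_self .. }

def reindex {ν' : Type} (e : ν' ≃ ν) (R : QuietRun P ν q) : QuietRun P ν' q where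
  E x y := R.E (e x) (e y)
  E_symm _ _ h := R.E_symm h
  E_irrefl x := R.E_irrefl (e x)
  init := R.init ∘ e
  last := R.last ∘ e
  node := e.symm R.node
  init_mem v := R.init_mem (e v)
  reach := by
    simpa using R.reach.lift (· ∘ e) fun _ _ h => h.comp_equiv e
  last_node := by simpa using R.last_node

noncomputable def reception {ν₂ : Type} [DecidableEq ν] [DecidableEq ν₂] {m : M} {q' p p' : Q}
    (R₁ : QuietRun P ν q) (R₂ : QuietRun P ν₂ p) (hbr : P.br q m q') (hrcv : P.rcv p m p') :
    QuietRun P (ν ⊕ ν₂) p' where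
  E := bridge R₁.E R₂.E R₁.node R₂.node
  E_symm := bridge_symmetric R₁.E_symm R₂.E_symm
  E_irrefl := bridge_irreflexive R₁.E_irrefl R₂.E_irrefl
  init := Sum.elim R₁.init R₂.init
  last := Sum.elim (Function.update (receiveFrom P R₁.E R₁.node m R₁.last) R₁.node q')
    (Function.update R₂.last R₂.node p')
  node := .inr R₂.node
  init_mem := by
    rintro (v | v)
    exacts [R₁.init_mem v, R₂.init_mem v]
  reach :=
    ((R₁.reach.lift _ fun _ _ h => h.sum_inl R₂.init).trans
      (R₂.reach.lift _ fun _ _ h => h.sum_inr R₁.last)).tail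
      (.bridge_broadcast (c₁ := R₁.last) (c₂ := R₂.last) (by rwa [R₁.last_node])
        (by rwa [R₂.last_node]))
  last_node := by simp

theorem exists_lExec_covers [Fintype ν] [DecidableEq ν] (R : QuietRun P ν q) :
    ∃ (r : ℕ) (ρ : LExec P ν r), ρ.Covers {q} := by
  obtain ⟨r, ρ, -, hlast⟩ :=
    exists_lExec_of_reflTransGen_lossyStep R.E_symm R.E_irrefl R.init_mem R.reach
  exact ⟨r, ρ, R.node, by simp [hlast, R.last_node]⟩

end QuietRun

theorem Sat.exists_quietRun {q : Q} (h : Sat P q) : ∃ k, Nonempty (QuietRun P (Fin k) q) := by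
  induction h with
  | base q hq => exact ⟨1, ⟨.ofMemInit 0 hq⟩⟩
  | broadcast _ _ _ _ hbr ih =>
    obtain ⟨k, ⟨R⟩⟩ := ih
    exact ⟨k, ⟨R.broadcast hbr⟩⟩
  | reception _ _ _ _ _ _ _ _ hbr hrcv ih₁ _ ih₃ =>
    obtain ⟨k₁, ⟨R₁⟩⟩ := ih₁
    obtain ⟨k₂, ⟨R₂⟩⟩ := ih₃
    exact ⟨k₁ + k₂, ⟨(R₁.reception R₂ hbr hrcv).reindex finSumFinEquiv.symm⟩⟩

theorem sat_iff_exists_lExec_covers (q : Q) :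
    Sat P q ↔ ∃ (k r : ℕ) (ρ : LExec P (Fin k) r), ρ.Covers {q} := by
  refine ⟨fun h => ?_, fun ⟨k, r, ρ, v, hv⟩ => hv ▸ ρ.sat_lab (Fin.last r) v⟩
  obtain ⟨k, ⟨R⟩⟩ := h.exists_quietRun
  exact ⟨k, R.exists_lExec_covers⟩

end SaturationCorrectness

/-- **Correctness of the saturation construction for lossy networks.**
A state `q` belongs to the saturation set `S(B)` iff some lossy execution covers
`{q}`; consequently, a set `F` of states is coverable by a lossy execution iff `F`
meets the saturation set. -/
theorem saturation_correct_lossy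
    {Q M : Type} [Fintype Q] [DecidableEq Q] [Fintype M] (P : BroadcastProtocol Q M) :
    (∀ q : Q, Sat P q ↔ ∃ (k r : ℕ) (ρ : LExec P (Fin k) r), ρ.Covers {q}) ∧
    (∀ F : Set Q,
      (∃ (k r : ℕ) (ρ : LExec P (Fin k) r), ρ.Covers F) ↔ ∃ q ∈ F, Sat P q) := by
  refine ⟨sat_iff_exists_lExec_covers, fun F => ⟨?_, ?_⟩⟩
  · rintro ⟨k, r, ρ, v, hv⟩
    exact ⟨_, hv, ρ.sat_lab (Fin.last r) v⟩
  · rintro ⟨q, hqF, hq⟩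
    obtain ⟨k, r, ρ, v, rfl⟩ := (sat_iff_exists_lExec_covers q).mp hq
    exact ⟨k, r, ρ, v, hqF⟩
end

section
/- Upper bounds on cutoff and covering length for lossy networks: let B = (Q, I, Σ, Δ) be a broadcast protocol and F ⊆ Q. If there exists a lossy execution of B covering F, then there exists a lossy execution ρ covering F with size |ρ| ≤ 2|Q| and length ‖ρ‖ ≤ 2|Q|². -/
/-!
A state is coverable in a lossy network iff it lies in the saturation `⋃ₙ sat n`: losses let
each broadcast step happen in isolation, and a reception needs only one neighbour able to
broadcast the message. Conversely, fix for every coverable non-initial state `q` a rule deriving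
it from states of smaller stage. The small network has a node aiming at the covered state and,
for each such `q`, a helper node aiming at the state from which the message needed by `q` is
broadcast; a helper is linked to the nodes whose chain of parents passes through `q` when `q` is
derived by reception. Processing the states by increasing stage, all nodes whose chain passes
through `q` sit at the parent of `q` when `q` is processed, and reach `q` either by lost
broadcasts of their own or together, by receiving the single real broadcast of `q`'s helper,
whose other neighbours are helpers that have already served. Each state costs at most one step
per node, so `|Q| + 1` nodes and `(|Q| + 1) |Q|` steps suffice.
-/

open Relation

namespace LExec

variable {Q M : Type} [Fintype Q] [DecidableEq Q] [Fintype M] {P : BroadcastProtocol Q M}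
  {ν ν' : Type} [Fintype ν] [DecidableEq ν] [Fintype ν'] [DecidableEq ν'] {r : ℕ}

def mapNodes (e : ν ≃ ν') (ρ : LExec P ν r) : LExec P ν' r where
  lab i v := ρ.lab i (e.symm v)
  E a b := ρ.E (e.symm a) (e.symm b)
  E_symm _ _ h := ρ.E_symm h
  E_irrefl _ h := ρ.E_irrefl _ h
  sender i := e (ρ.sender i)
  msg := ρ.msg
  lost := ρ.lost
  init _ := ρ.init _
  step_br i := by simpa using ρ.step_br i
  step_lost i hl v hv := ρ.step_lost i hl _ (mt e.symm_apply_eq.1 hv)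
  step_real i hl v hv := by simpa using ρ.step_real i hl _ (mt e.symm_apply_eq.1 hv)

@[simp]
lemma lastLab_mapNodes (e : ν ≃ ν') (ρ : LExec P ν r) (v : ν) :
    (ρ.mapNodes e).lastLab (e v) = ρ.lastLab v := by
  simp [mapNodes, lastLab]

end LExec

namespace BroadcastProtocol

variable {Q M : Type} [Fintype Q] [DecidableEq Q] [Fintype M] (P : BroadcastProtocol Q M)
  {ν : Type}

def LossyStep (E : ν → ν → Prop) (L L' : ν → Q) : Prop :=
  ∃ (n : ν) (m : M) (lost : Bool), P.br (L n) m (L' n) ∧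
    (lost = true → ∀ v, v ≠ n → L' v = L v) ∧
    (lost = false → ∀ v, v ≠ n →
      (E n v → P.rcv (L v) m (L' v)) ∧ (¬ E n v → L' v = L v))

inductive LossySteps (E : ν → ν → Prop) : (ν → Q) → (ν → Q) → ℕ → Prop
  | refl (L : ν → Q) : LossySteps E L L 0
  | tail {L L' L'' : ν → Q} {r : ℕ} :
      LossySteps E L L' r → P.LossyStep E L' L'' → LossySteps E L L'' (r + 1)

variable {P} {E : ν → ν → Prop}

lemma LossySteps.single {L L' : ν → Q} (h : P.LossyStep E L L') : P.LossySteps E L L' 1 :=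
  (refl L).tail h

lemma LossySteps.trans {L₁ L₂ L₃ : ν → Q} {a b : ℕ} (h₁ : P.LossySteps E L₁ L₂ a)
    (h₂ : P.LossySteps E L₂ L₃ b) : P.LossySteps E L₁ L₃ (a + b) := by
  induction h₂ with
  | refl => exact h₁
  | tail _ h ih => exact ih.tail h

lemma LossySteps.of_lost_broadcasts [DecidableEq ν] (L : ν → Q) (G : Finset ν) (m : ν → M)
    (g : ν → Q) (h : ∀ v ∈ G, P.br (L v) (m v) (g v)) :
    P.LossySteps E L (fun v => if v ∈ G then g v else L v) G.card := by
  induction G using Finset.cons_induction with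
  | empty => simpa using refl L
  | cons a G ha ih =>
    have hstep : P.LossyStep E (fun v => if v ∈ G then g v else L v)
        (fun v => if v ∈ Finset.cons a G ha then g v else L v) := by
      refine ⟨a, m a, true, by simpa [ha] using h a (Finset.mem_cons_self ..), fun _ v hv => ?_,
        by simp⟩
      simp [hv]
    rw [Finset.card_cons]
    exact (ih fun v hv => h v (Finset.mem_cons_of_mem hv)).tail hstep

lemma LossySteps.exists_trace {L L' : ν → Q} {r : ℕ} (h : P.LossySteps E L L' r) :
    ∃ g : Fin (r + 1) → ν → Q, g 0 = L ∧ g (Fin.last r) = L' ∧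
      ∀ i : Fin r, P.LossyStep E (g i.castSucc) (g i.succ) := by
  induction h with
  | refl => exact ⟨fun _ => L, rfl, rfl, fun i => i.elim0⟩
  | @tail L' L'' r _ h ih =>
    obtain ⟨g, h0, hlast, hg⟩ := ih
    refine ⟨Fin.snoc g L'', ?_, by simp, fun i => ?_⟩
    · rw [← Fin.castSucc_zero, Fin.snoc_castSucc, h0]
    · induction i using Fin.lastCases with
      | last => simpa [hlast] using h
      | cast j =>
        rw [Fin.succ_castSucc, Fin.snoc_castSucc, Fin.snoc_castSucc]
        exact hg j

lemma LossySteps.exists_lexec [Fintype ν] [DecidableEq ν] {G : SimpleGraph ν} {L L' : ν → Q}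
    {r : ℕ} (h : P.LossySteps G.Adj L L' r) (hL : ∀ v, L v ∈ P.I) :
    ∃ ρ : LExec P ν r, ρ.lastLab = L' := by
  obtain ⟨g, h0, hlast, hg⟩ := h.exists_trace
  choose sender msg lost hbr hlost hreal using hg
  exact ⟨⟨g, G.Adj, fun _ _ => G.adj_symm, fun _ => G.irrefl, sender, msg, lost,
    by simpa [h0] using hL, hbr, hlost, hreal⟩, hlast⟩

lemma _root_.LExec.lossyStep {ν : Type} [Fintype ν] [DecidableEq ν] {r : ℕ}
    (ρ : LExec P ν r) (i : Fin r) : P.LossyStep ρ.E (ρ.lab i.castSucc) (ρ.lab i.succ) :=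
  ⟨ρ.sender i, ρ.msg i, ρ.lost i, ρ.step_br i, ρ.step_lost i, ρ.step_real i⟩

variable (P)

def sat : ℕ → Set Q
  | 0 => P.I
  | n + 1 => sat n ∪ {q' | ∃ q ∈ sat n, ∃ m, P.br q m q' ∨
      ((∃ p ∈ sat n, ∃ p', P.br p m p') ∧ P.rcv q m q')}

def Coverable (q : Q) : Prop := ∃ n, q ∈ P.sat n

noncomputable def stage (q : Q) : ℕ := sInf {n | q ∈ P.sat n}

open scoped Classical in
noncomputable def derived : Finset Q := {q | P.Coverable q ∧ q ∉ P.I}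

/-- For a step by broadcast one takes `src = pred` and `dst = q`. -/
structure Rule (q : Q) where
  pred : Q
  msg : M
  src : Q
  dst : Q
  coverable_pred : P.Coverable pred
  coverable_src : P.Coverable src
  stage_pred_lt : P.stage pred < P.stage q
  stage_src_lt : P.stage src < P.stage q
  br_src : P.br src msg dst
  step : P.br pred msg q ∨ P.rcv pred msg q

variable {P}

lemma sat_mono : Monotone P.sat :=
  monotone_nat_of_le_succ fun _ => Set.subset_union_left

lemma LossyStep.mem_sat_succ {ν : Type} {E : ν → ν → Prop} {L L' : ν → Q} {n : ℕ}
    (h : P.LossyStep E L L') (hL : ∀ v, L v ∈ P.sat n) (v : ν) : L' v ∈ P.sat (n + 1) := by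
  obtain ⟨s, m, lost, hbr, hlost, hreal⟩ := h
  by_cases hv : v = s
  · subst hv
    exact Or.inr ⟨L v, hL v, m, Or.inl hbr⟩
  cases lost with
  | true => exact hlost rfl v hv ▸ sat_mono n.le_succ (hL v)
  | false =>
    by_cases hE : E s v
    · exact Or.inr ⟨L v, hL v, m, Or.inr ⟨⟨L s, hL s, L' s, hbr⟩, (hreal rfl v hv).1 hE⟩⟩
    · exact (hreal rfl v hv).2 hE ▸ sat_mono n.le_succ (hL v)

lemma _root_.LExec.lab_mem_sat {ν : Type} [Fintype ν] [DecidableEq ν] {r : ℕ}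
    (ρ : LExec P ν r) (i : Fin (r + 1)) (v : ν) : ρ.lab i v ∈ P.sat i := by
  induction i using Fin.induction generalizing v with
  | zero => exact ρ.init v
  | succ i ih => exact (ρ.lossyStep i).mem_sat_succ ih v

lemma _root_.LExec.coverable_lastLab {ν : Type} [Fintype ν] [DecidableEq ν] {r : ℕ}
    (ρ : LExec P ν r) (v : ν) : P.Coverable (ρ.lastLab v) :=
  ⟨_, ρ.lab_mem_sat _ v⟩

lemma mem_sat_stage {q : Q} (h : P.Coverable q) : q ∈ P.sat (P.stage q) := Nat.sInf_mem h

lemma stage_le {q : Q} {n : ℕ} (h : q ∈ P.sat n) : P.stage q ≤ n := Nat.sInf_le h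

lemma mem_derived {q : Q} : q ∈ P.derived ↔ P.Coverable q ∧ q ∉ P.I := by
  simp [derived]

lemma nonempty_rule {q : Q} (hq : q ∈ P.derived) : Nonempty (P.Rule q) := by
  obtain ⟨hcov, hI⟩ := mem_derived.1 hq
  have hpos : P.stage q ≠ 0 := fun h0 => hI (by simpa [h0, sat] using mem_sat_stage hcov)
  have hmem := mem_sat_stage hcov
  rw [← Nat.succ_pred_eq_of_ne_zero hpos] at hmem
  have hlt : ∀ {a}, a ∈ P.sat (P.stage q).pred → P.stage a < P.stage q := fun ha =>
    (stage_le ha).trans_lt (Nat.pred_lt hpos)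
  rcases hmem with hmem | ⟨a, ha, m, hbr | ⟨⟨p, hp, p', hbr⟩, hrcv⟩⟩
  · exact absurd (stage_le hmem) (Nat.not_le.2 (Nat.pred_lt hpos))
  · exact ⟨⟨a, m, a, q, ⟨_, ha⟩, ⟨_, ha⟩, hlt ha, hlt ha, hbr, Or.inl hbr⟩⟩
  · exact ⟨⟨a, m, p, p', ⟨_, ha⟩, ⟨_, hp⟩, hlt ha, hlt hp, hbr, Or.inr hrcv⟩⟩

variable (P)

noncomputable def rule (t : P.derived) : P.Rule t := Classical.choice (nonempty_rule t.2)

def IsParent (a b : Q) : Prop := ∃ hb : b ∈ P.derived, (P.rule ⟨b, hb⟩).pred = a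

/-- Where a node aiming at `q` stands once the states of `U` have been processed. -/
noncomputable def descend (U : Finset Q) (q : Q) : Q :=
  if h : q ∈ P.derived \ U then descend U (P.rule ⟨q, (Finset.mem_sdiff.1 h).1⟩).pred else q
termination_by P.stage q
decreasing_by exact (P.rule _).stage_pred_lt

variable {P}

lemma stage_le_of_ancestor {a b : Q} (h : ReflTransGen P.IsParent a b) :
    P.stage a ≤ P.stage b := by
  induction h with
  | refl => rfl
  | tail _ hbc ih =>
    obtain ⟨_, rfl⟩ := hbc
    exact ih.trans (P.rule _).stage_pred_lt.le

lemma descend_of_notMem {U : Finset Q} {q : Q} (h : q ∉ P.derived \ U) : P.descend U q = q := by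
  rw [descend, dif_neg h]

lemma descend_of_mem {U : Finset Q} {q : Q} (h : q ∈ P.derived \ U) :
    P.descend U q = P.descend U (P.rule ⟨q, (Finset.mem_sdiff.1 h).1⟩).pred := by
  rw [descend, dif_pos h]

lemma coverable_descend {U : Finset Q} {q : Q} (hq : P.Coverable q) :
    P.Coverable (P.descend U q) ∧ P.descend U q ∉ P.derived \ U := by
  fun_induction P.descend U q with
  | case1 q h ih => exact ih (P.rule _).coverable_pred
  | case2 q h => exact ⟨hq, h⟩

lemma descend_eq_of_ancestor {U : Finset Q} {p q : Q} (h : ReflTransGen P.IsParent p q)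
    (hU : ∀ y, ReflTransGen P.IsParent y q → P.stage p < P.stage y → y ∉ U) :
    P.descend U q = P.descend U p := by
  induction h with
  | refl => rfl
  | @tail b c hpb hbc ih =>
    obtain ⟨hc, rfl⟩ := hbc
    have hcU : c ∉ U := hU c .refl ((stage_le_of_ancestor hpb).trans_lt (P.rule _).stage_pred_lt)
    rw [descend_of_mem (Finset.mem_sdiff.2 ⟨hc, hcU⟩)]
    exact ih fun y hy => hU y (hy.tail ⟨hc, rfl⟩)

lemma descend_insert_of_not_ancestor {U : Finset Q} {p q : Q}
    (h : ¬ ReflTransGen P.IsParent p q) : P.descend (insert p U) q = P.descend U q := by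
  fun_induction P.descend U q with
  | case1 q hq ih =>
    have hqp : q ≠ p := by rintro rfl; exact h .refl
    have hq' : q ∈ P.derived \ insert p U := by
      simp only [Finset.mem_sdiff, Finset.mem_insert] at hq ⊢
      tauto
    rw [descend_of_mem hq']
    exact ih fun h' => h (h'.tail ⟨_, rfl⟩)
  | case2 q hq =>
    exact descend_of_notMem fun h' => hq (Finset.sdiff_subset_sdiff le_rfl (U.subset_insert p) h')

lemma descend_of_stage_lt {U : Finset Q} {p x : Q}
    (hbelow : ∀ y ∈ P.derived, P.stage y < P.stage p → y ∈ U) (hx : P.stage x < P.stage p) :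
    P.descend U x = x :=
  descend_of_notMem fun h => (Finset.mem_sdiff.1 h).2 (hbelow x (Finset.mem_sdiff.1 h).1 hx)

variable (P) (f : Q)

/-- The node `none` aims at `f`; the helper node `some t` aims at the state from which it
broadcasts the message needed to derive `t`. -/
noncomputable def target : Option P.derived → Q
  | none => f
  | some t => (P.rule t).src

def IsReception (t : P.derived) : Prop := ¬ P.br (P.rule t).pred (P.rule t).msg t

def Serves : Option P.derived → Option P.derived → Prop
  | some t, v => P.IsReception t ∧ ReflTransGen P.IsParent t (P.target f v)
  | none, _ => False

def network : SimpleGraph (Option P.derived) := SimpleGraph.fromRel (P.Serves f)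

/-- Helpers that have made their broadcast are no longer tracked. -/
def Pending (U : Finset Q) (v : Option P.derived) : Prop :=
  ∀ t, v = some t → P.IsReception t → (t : Q) ∉ U

def Placed (U : Finset Q) (L : Option P.derived → Q) : Prop :=
  ∀ v, P.Pending U v → L v = P.descend U (P.target f v)

variable {P f}

lemma coverable_target (hf : P.Coverable f) : ∀ v, P.Coverable (P.target f v)
  | none => hf
  | some t => (P.rule t).coverable_src

lemma mem_I_descend_empty_target (hf : P.Coverable f) (v : Option P.derived) :
    P.descend ∅ (P.target f v) ∈ P.I := by
  obtain ⟨hcov, hnot⟩ := coverable_descend (U := ∅) (coverable_target hf v)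
  by_contra hI
  exact hnot (by simpa [mem_derived] using And.intro hcov hI)

section Round

variable {U : Finset Q} {p : P.derived}

lemma pending_of_ancestor (habove : ∀ x ∈ U, P.stage x ≤ P.stage p) {v : Option P.derived}
    (hv : ReflTransGen P.IsParent p (P.target f v)) : P.Pending U v := by
  rintro t rfl - htU
  have := (stage_le_of_ancestor hv).trans_lt (P.rule t).stage_src_lt
  exact absurd (habove t htU) (Nat.not_le.2 this)

lemma descend_target_of_ancestor (hpU : (p : Q) ∉ U)
    (hbelow : ∀ x ∈ P.derived, P.stage x < P.stage p → x ∈ U)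
    (habove : ∀ x ∈ U, P.stage x ≤ P.stage p) {v : Option P.derived}
    (hv : ReflTransGen P.IsParent p (P.target f v)) :
    P.descend U (P.target f v) = (P.rule p).pred := by
  rw [descend_eq_of_ancestor hv fun y _ hy hyU => absurd (habove y hyU) (Nat.not_le.2 hy),
    descend_of_mem (Finset.mem_sdiff.2 ⟨p.2, hpU⟩)]
  exact descend_of_stage_lt hbelow (P.rule p).stage_pred_lt

lemma Placed.insert (habove : ∀ x ∈ U, P.stage x ≤ P.stage p) {L L' : Option P.derived → Q}
    (hL : P.Placed f U L) (hclient : ∀ v, ReflTransGen P.IsParent p (P.target f v) → L' v = p)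
    (hother : ∀ v, ¬ ReflTransGen P.IsParent p (P.target f v) →
      P.Pending (insert (p : Q) U) v → L' v = L v) :
    P.Placed f (insert (p : Q) U) L' := by
  intro v hv
  by_cases hc : ReflTransGen P.IsParent p (P.target f v)
  · rw [hclient v hc, descend_eq_of_ancestor hc, descend_of_notMem (by simp)]
    intro y _ hy hyU
    rcases Finset.mem_insert.1 hyU with rfl | hyU
    · exact lt_irrefl _ hy
    · exact absurd (habove y hyU) (Nat.not_le.2 hy)
  · rw [hother v hc hv, hL v fun t ht hR htU => hv t ht hR (Finset.mem_insert_of_mem htU),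
      descend_insert_of_not_ancestor hc]

lemma exists_round_of_isReception (hpU : (p : Q) ∉ U)
    (hbelow : ∀ x ∈ P.derived, P.stage x < P.stage p → x ∈ U)
    (habove : ∀ x ∈ U, P.stage x ≤ P.stage p) (hR : P.IsReception p)
    {L : Option P.derived → Q} (hL : P.Placed f U L) :
    ∃ L', P.LossySteps (P.network f).Adj L L' 1 ∧ P.Placed f (insert (p : Q) U) L' := by
  classical
  let Client v := ReflTransGen P.IsParent p (P.target f v)
  let L' v := if v = some p then (P.rule p).dst else if Client v then (p : Q)
    else if (P.network f).Adj (some p) v then (P.complete (L v) (P.rule p).msg).choose else L v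
  have hsrc : L (some p) = (P.rule p).src :=
    (hL _ fun _ ht _ => Option.some_injective _ ht ▸ hpU).trans
      (descend_of_stage_lt hbelow (P.rule p).stage_src_lt)
  have hclient : ∀ v, Client v → L v = (P.rule p).pred := fun v hv =>
    (hL v (pending_of_ancestor habove hv)).trans (descend_target_of_ancestor hpU hbelow habove hv)
  have hself : ¬ Client (some p) := fun h =>
    absurd (stage_le_of_ancestor h) (Nat.not_le.2 (P.rule p).stage_src_lt)
  refine ⟨L', .single ⟨some p, (P.rule p).msg, false, by simpa [L', hsrc] using (P.rule p).br_src,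
    by simp, fun _ v hv => ⟨fun hadj => ?_, fun hadj => ?_⟩⟩, ?_⟩
  · by_cases hc : Client v
    · simpa [L', hv, hc, hclient v hc] using (P.rule p).step.resolve_left hR
    · simpa [L', hv, hc, hadj] using (P.complete (L v) _).choose_spec
  · have hc : ¬ Client v := fun hc =>
      hadj ((SimpleGraph.fromRel_adj _ _ _).2 ⟨Ne.symm hv, Or.inl ⟨hR, hc⟩⟩)
    simp [L', hv, hc, hadj]
  · refine hL.insert habove (fun v hc => ?_) (fun v hc hv => ?_)
    · have hne : v ≠ some p := by rintro rfl; exact hself hc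
      simp [L', hne, hc, Client]
    · have hne : v ≠ some p := by rintro rfl; exact hv p rfl hR (Finset.mem_insert_self _ _)
      have hadj : ¬ (P.network f).Adj (some p) v := by
        rintro ⟨-, h | h⟩
        · exact hc h.2
        · cases v with
          | none => exact h
          | some t =>
            refine hv t rfl h.1 (Finset.mem_insert_of_mem (hbelow _ t.2 ?_))
            exact (stage_le_of_ancestor h.2).trans_lt (P.rule p).stage_src_lt
      simp [L', hne, hc, hadj, Client]

lemma exists_round_of_not_isReception (hpU : (p : Q) ∉ U)
    (hbelow : ∀ x ∈ P.derived, P.stage x < P.stage p → x ∈ U)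
    (habove : ∀ x ∈ U, P.stage x ≤ P.stage p) (hR : ¬ P.IsReception p)
    {L : Option P.derived → Q} (hL : P.Placed f U L) :
    ∃ L' s, P.LossySteps (P.network f).Adj L L' s ∧ s ≤ Fintype.card (Option P.derived) ∧
      P.Placed f (insert (p : Q) U) L' := by
  classical
  let C : Finset (Option P.derived) := {v | ReflTransGen P.IsParent p (P.target f v)}
  refine ⟨_, C.card, .of_lost_broadcasts L C (fun _ => (P.rule p).msg) (fun _ => p) ?_,
    C.card_le_univ, hL.insert habove (fun v hc => by simp [C, hc]) (fun v hc _ => by simp [C, hc])⟩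
  intro v hv
  rw [hL v (pending_of_ancestor habove (by simpa [C] using hv)),
    descend_target_of_ancestor hpU hbelow habove (by simpa [C] using hv)]
  exact not_not.1 hR

lemma exists_round (hpU : (p : Q) ∉ U)
    (hbelow : ∀ x ∈ P.derived, P.stage x < P.stage p → x ∈ U)
    (habove : ∀ x ∈ U, P.stage x ≤ P.stage p) {L : Option P.derived → Q}
    (hL : P.Placed f U L) :
    ∃ L' s, P.LossySteps (P.network f).Adj L L' s ∧ s ≤ Fintype.card (Option P.derived) ∧
      P.Placed f (insert (p : Q) U) L' := by
  by_cases hR : P.IsReception p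
  · obtain ⟨L', hsteps, hL'⟩ := exists_round_of_isReception hpU hbelow habove hR hL
    exact ⟨L', 1, hsteps, Fintype.card_pos, hL'⟩
  · exact exists_round_of_not_isReception hpU hbelow habove hR hL

end Round

lemma exists_lossySteps_placed_derived {U : Finset Q} (hU : U ⊆ P.derived)
    (hUlow : ∀ x ∈ U, ∀ y ∈ P.derived \ U, P.stage x ≤ P.stage y) {L : Option P.derived → Q}
    (hL : P.Placed f U L) :
    ∃ L' s, P.LossySteps (P.network f).Adj L L' s ∧
      s ≤ Fintype.card (Option P.derived) * (P.derived \ U).card ∧ P.Placed f P.derived L' := by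
  induction hn : (P.derived \ U).card generalizing U L with
  | zero =>
    have hUeq : U = P.derived := hU.antisymm (Finset.sdiff_eq_empty_iff_subset.1
      (Finset.card_eq_zero.1 hn))
    exact ⟨L, 0, .refl L, le_rfl, hUeq ▸ hL⟩
  | succ n ih =>
    obtain ⟨p, hp, hmin⟩ := Finset.exists_min_image (P.derived \ U) P.stage
      (Finset.card_pos.1 (by omega))
    obtain ⟨hpd, hpU⟩ := Finset.mem_sdiff.1 hp
    have hbelow : ∀ x ∈ P.derived, P.stage x < P.stage p → x ∈ U := fun x hx hlt => by
      by_contra hxU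
      exact absurd (hmin x (Finset.mem_sdiff.2 ⟨hx, hxU⟩)) (Nat.not_le.2 hlt)
    obtain ⟨L₁, s₁, hsteps₁, hs₁, hL₁⟩ :=
      exists_round (p := ⟨p, hpd⟩) hpU hbelow (fun x hx => hUlow x hx p hp) hL
    have hlow' : ∀ x ∈ insert p U, ∀ y ∈ P.derived \ insert p U, P.stage x ≤ P.stage y := by
      intro x hx y hy
      have hyU : y ∈ P.derived \ U := Finset.sdiff_subset_sdiff le_rfl (U.subset_insert p) hy
      rcases Finset.mem_insert.1 hx with rfl | hx
      exacts [hmin y hyU, hUlow x hx y hyU]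
    have hcard : (P.derived \ insert p U).card = n := by
      rw [Finset.sdiff_insert, Finset.card_erase_of_mem hp, hn, Nat.add_sub_cancel]
    obtain ⟨L₂, s₂, hsteps₂, hs₂, hL₂⟩ :=
      ih (Finset.insert_subset hpd hU) hlow' hL₁ hcard
    refine ⟨L₂, s₁ + s₂, hsteps₁.trans hsteps₂, ?_, hL₂⟩
    rw [Nat.mul_succ]
    omega

theorem exists_lexec_lastLab_eq (hf : P.Coverable f) :
    ∃ (r : ℕ) (ρ : LExec P (Option P.derived) r), ρ.lastLab none = f ∧
      r ≤ Fintype.card (Option P.derived) * P.derived.card := by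
  obtain ⟨L, r, hsteps, hr, hL⟩ := exists_lossySteps_placed_derived (f := f)
    (Finset.empty_subset _) (by simp) (L := fun v => P.descend ∅ (P.target f v)) fun _ _ => rfl
  obtain ⟨ρ, hρ⟩ := hsteps.exists_lexec (mem_I_descend_empty_target hf)
  refine ⟨r, ρ, ?_, by simpa using hr⟩
  rw [hρ, hL none (by simp [Pending])]
  exact descend_of_notMem (by simp)

end BroadcastProtocol

/-- **Upper bounds on cutoff and covering length for lossy networks.**
If some lossy execution of `P` covers `F`, then there is a lossy execution covering
`F` with at most `2|Q|` nodes and length at most `2|Q|²`. -/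
theorem upper_bounds_lossy
    {Q M : Type} [Fintype Q] [DecidableEq Q] [Fintype M] (P : BroadcastProtocol Q M)
    (F : Set Q) (ν : Type) [Fintype ν] [DecidableEq ν]
    (r₀ : ℕ) (ρ₀ : LExec P ν r₀) (h : ρ₀.Covers F) :
    ∃ (k r : ℕ) (ρ : LExec P (Fin k) r), ρ.Covers F ∧
      k ≤ 2 * Fintype.card Q ∧ r ≤ 2 * Fintype.card Q ^ 2 := by
  obtain ⟨v₀, hv₀⟩ := h
  obtain ⟨r, ρ, hρ, hr⟩ := BroadcastProtocol.exists_lexec_lastLab_eq (ρ₀.coverable_lastLab v₀)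
  have hcardQ : 0 < Fintype.card Q := Fintype.card_pos_iff.2 ⟨ρ₀.lastLab v₀⟩
  have hder : P.derived.card ≤ Fintype.card Q := P.derived.card_le_univ
  have hnodes : Fintype.card (Option P.derived) ≤ Fintype.card Q + 1 := by
    simpa [Fintype.card_option] using hder
  let e := Fintype.equivFin (Option P.derived)
  refine ⟨_, r, ρ.mapNodes e, ⟨e none, by simpa [hρ] using hv₀⟩, by omega, ?_⟩
  calc r ≤ (Fintype.card Q + 1) * Fintype.card Q := hr.trans (Nat.mul_le_mul hnodes hder)
    _ ≤ 2 * Fintype.card Q ^ 2 := by nlinarith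
end

section
/- Linear lower bound on the cutoff: for every n ≥ 1, there exists a reconfigurable execution of the broadcast protocol B_n covering {☺}, and every reconfigurable execution of B_n covering {☺} has at least n + 1 nodes. Since every lossy execution induces a reconfigurable one, every lossy execution of B_n covering {☺} also has at least n + 1 nodes. -/
/- ## The protocol B_n (linear cutoff / quadratic length lower bounds) -/

def BnBr (n : ℕ) : Fin (2 * n + 1) → (Fin n ⊕ Fin n) → Fin (2 * n + 1) → Prop
  | q, .inl i, q' => (q : ℕ) = 2 * (i : ℕ) ∧ (q' : ℕ) = 2 * (i : ℕ) + 1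
  | q, .inr i, q' => (q : ℕ) = 2 * (i : ℕ) + 1 ∧ q' = q

def BnRcvF (n : ℕ) (q : Fin (2 * n + 1)) (m : Fin n ⊕ Fin n) : Fin (2 * n + 1) :=
  match m with
  | .inl _ => q
  | .inr i =>
      if (q : ℕ) = 2 * (i : ℕ) + 1 then ⟨2 * (i : ℕ) + 2, by have := i.isLt; omega⟩ else q

def Bn (n : ℕ) : BroadcastProtocol (Fin (2 * n + 1)) (Fin n ⊕ Fin n) where
  I := {0}
  br := BnBr n
  rcv := fun q m q' => q' = BnRcvF n q m
  complete := fun q m => ⟨BnRcvF n q m, rfl⟩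

def BnSmiley (n : ℕ) : Fin (2 * n + 1) := ⟨2 * n, by omega⟩

/-!
A node leaves an odd state `q_{2k+1}` only by receiving `b_{k+1}`, and it passes from below
`q_{2k+2}` to `q_{2k+2}` only in the same way; either time, the sender of `b_{k+1}` is and stays in
`q_{2k+1}`. Hence in every configuration each odd state below the state of some node is occupied,
and a configuration covering `☺ = q_{2n}` has nodes in the `n + 1` distinct states
`q_1, q_3, …, q_{2n-1}, ☺`. Conversely, `n + 1` nodes suffice: in round `k` all nodes in `q_{2k}`
broadcast `a_{k+1}`, then one of them broadcasts `b_{k+1}` to the others and stays behind in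
`q_{2k+1}`.
-/

section Executions
variable {Q M : Type} [Fintype Q] [DecidableEq Q] [Fintype M] {ν : Type} [Fintype ν] [DecidableEq ν]

def BroadcastProtocol.RReachable (P : BroadcastProtocol Q M) (L : ν → Q) : Prop :=
  ∃ (r : ℕ) (ρ : RExec P ν r), ρ.lastLab = L

namespace BroadcastProtocol

variable {P : BroadcastProtocol Q M} {L L' : ν → Q}

theorem rReachable_of_forall_mem_I (hL : ∀ v, L v ∈ P.I) : P.RReachable L :=
  ⟨0, ⟨fun _ => L, fun _ _ _ => False, fun _ _ _ h => h, fun _ _ h => h, Fin.elim0, Fin.elim0,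
    hL, fun i => i.elim0, fun i => i.elim0⟩, rfl⟩

theorem RReachable.step (hL : P.RReachable L) (G : SimpleGraph ν) (v : ν) (m : M)
    (hbr : P.br (L v) m (L' v))
    (hrcv : ∀ w, w ≠ v → (G.Adj v w → P.rcv (L w) m (L' w)) ∧ (¬ G.Adj v w → L' w = L w)) :
    P.RReachable L' := by
  obtain ⟨r, ρ, rfl⟩ := hL
  -- Step `i` uses the topology of configuration `i`, so `G` replaces the last topology of `ρ`.
  refine ⟨r + 1, ⟨Fin.snoc (α := fun _ => ν → Q) ρ.lab L',
    Fin.snoc (α := fun _ => ν → ν → Prop) (Fin.snoc (α := fun _ => ν → ν → Prop)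
      (Fin.init ρ.edges) G.Adj) G.Adj, ?_, ?_,
    Fin.snoc (α := fun _ => ν) ρ.sender v, Fin.snoc (α := fun _ => M) ρ.msg m, ?_, ?_, ?_⟩,
    Fin.snoc_last (α := fun _ => ν → Q) _ _⟩
  · intro i
    induction i using Fin.lastCases with
    | last => simp only [Fin.snoc_last]; exact fun _ _ => G.adj_symm
    | cast i =>
      induction i using Fin.lastCases with
      | last => simp only [Fin.snoc_castSucc, Fin.snoc_last]; exact fun _ _ => G.adj_symm
      | cast i => simpa [Fin.init] using ρ.edges_symm i.castSucc
  · intro i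
    induction i using Fin.lastCases with
    | last => simp only [Fin.snoc_last]; exact fun _ => G.irrefl
    | cast i =>
      induction i using Fin.lastCases with
      | last => simp only [Fin.snoc_castSucc, Fin.snoc_last]; exact fun _ => G.irrefl
      | cast i => simpa [Fin.init] using ρ.edges_irrefl i.castSucc
  · intro w
    rw [← Fin.castSucc_zero, Fin.snoc_castSucc]
    exact ρ.init w
  · intro i
    induction i using Fin.lastCases with
    | last => simp only [Fin.snoc_castSucc, Fin.succ_last, Fin.snoc_last]; exact hbr
    | cast j => simp only [Fin.succ_castSucc, Fin.snoc_castSucc]; exact ρ.step_br j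
  · intro i
    induction i using Fin.lastCases with
    | last => simp only [Fin.snoc_castSucc, Fin.succ_last, Fin.snoc_last]; exact hrcv
    | cast j => simp only [Fin.succ_castSucc, Fin.snoc_castSucc, Fin.init]; exact ρ.step_rcv j

theorem RReachable.update (hL : P.RReachable L) (v : ν) (m : M) {q : Q} (hbr : P.br (L v) m q) :
    P.RReachable (Function.update L v q) :=
  hL.step ⊥ v m (by simpa using hbr) fun _ hw =>
    ⟨fun h => h.elim, fun _ => Function.update_of_ne hw _ _⟩

theorem RReachable.of_forall_eq_or_br (hL : P.RReachable L)
    (h : ∀ v, L' v = L v ∨ ∃ m, P.br (L v) m (L' v)) : P.RReachable L' := by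
  suffices key : ∀ (S : Finset ν) (L' : ν → Q), (∀ v, L' v = L v ∨ ∃ m, P.br (L v) m (L' v)) →
      (∀ v ∉ S, L' v = L v) → P.RReachable L' from key Finset.univ L' h (by simp)
  intro S
  induction S using Finset.induction_on with
  | empty =>
    intro L' _ hL'
    obtain rfl : L' = L := funext fun v => hL' v (Finset.notMem_empty v)
    exact hL
  | insert a S _ ih =>
    intro L' h hL'
    have hmid : P.RReachable (Function.update L' a (L a)) := by
      refine ih _ (fun v => ?_) (fun v hv => ?_)
      · rcases eq_or_ne v a with rfl | hva
        · simp
        · simpa [hva] using h v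
      · rcases eq_or_ne v a with rfl | hva
        · simp
        · simpa [hva] using hL' v (by simp [hva, hv])
    rcases h a with heq | ⟨m, hbr⟩
    · simpa [← heq] using hmid
    · simpa using hmid.update a m (q := L' a) (by simpa using hbr)

end BroadcastProtocol

namespace LExec

variable {P : BroadcastProtocol Q M} {r : ℕ}

/-- A lost broadcast is a broadcast in a topology without edges. -/
def toRExec (ρ : LExec P ν r) : RExec P ν r where
  lab := ρ.lab
  edges i a b := ρ.E a b ∧ ∃ j : Fin r, j.castSucc = i ∧ ρ.lost j = false
  edges_symm _ _ _ h := ⟨ρ.E_symm h.1, h.2⟩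
  edges_irrefl _ a h := ρ.E_irrefl a h.1
  sender := ρ.sender
  msg := ρ.msg
  init := ρ.init
  step_br := ρ.step_br
  step_rcv i v hv := by
    simp only [Fin.castSucc_inj, exists_eq_left]
    cases hl : ρ.lost i with
    | true => simp [ρ.step_lost i hl v hv]
    | false => simpa using ρ.step_real i hl v hv

theorem Covers.toRExec {ρ : LExec P ν r} {F : Set Q} (h : ρ.Covers F) : ρ.toRExec.Covers F := h

end LExec

end Executions

section OddBelowOccupied

variable {ν : Type*}

def OddBelowOccupied (ℓ : ν → ℕ) : Prop :=
  ∀ v k, 2 * k + 1 < ℓ v → ∃ w, ℓ w = 2 * k + 1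

theorem OddBelowOccupied.of_step {ℓ ℓ' : ν → ℕ} (hℓ : OddBelowOccupied ℓ) (σ : ν)
    (hstep : ∀ v, ℓ' v = ℓ v ∨ (Even (ℓ v) ∧ ℓ' v = ℓ v + 1) ∨ (ℓ' v = ℓ v + 1 ∧ ℓ' σ = ℓ v)) :
    OddBelowOccupied ℓ' := by
  intro v k hv
  have of_old : ∀ u, 2 * k + 1 < ℓ u → ∃ w, ℓ' w = 2 * k + 1 := by
    intro u hu
    obtain ⟨w, hw⟩ := hℓ u k hu
    rcases hstep w with h | ⟨⟨j, hj⟩, _⟩ | ⟨_, h⟩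
    · exact ⟨w, h.trans hw⟩
    · omega
    · exact ⟨σ, h.trans hw⟩
  rcases hstep v with h | ⟨⟨j, hj⟩, h⟩ | ⟨h, hσ⟩
  · exact of_old v (by omega)
  · exact of_old v (by omega)
  · obtain hlt | heq : 2 * k + 1 < ℓ v ∨ 2 * k + 1 = ℓ v := by omega
    · exact of_old v hlt
    · exact ⟨σ, hσ.trans heq.symm⟩

theorem OddBelowOccupied.card_le [Fintype ν] {ℓ : ν → ℕ} (hℓ : OddBelowOccupied ℓ) {v : ν}
    {n : ℕ} (hv : 2 * n ≤ ℓ v) : n + 1 ≤ Fintype.card ν := by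
  classical
  let T := insert (ℓ v) ((Finset.range n).image fun k => 2 * k + 1)
  have hT : T.card = n + 1 := by
    rw [Finset.card_insert_of_notMem, Finset.card_image_of_injective _ (by intro a b; simp),
      Finset.card_range]
    simp only [Finset.mem_image, Finset.mem_range, not_exists, not_and]
    omega
  have hsurj : Set.SurjOn ℓ (Finset.univ : Finset ν) T := by
    intro x hx
    simp only [T, Finset.coe_insert, Finset.coe_image, Finset.coe_range, Set.mem_insert_iff,
      Set.mem_image, Set.mem_Iio] at hx
    rcases hx with rfl | ⟨k, hk, rfl⟩
    · exact ⟨v, by simp⟩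
    · obtain ⟨w, hw⟩ := hℓ v k (by omega)
      exact ⟨w, by simp, hw⟩
  calc n + 1 = T.card := hT.symm
    _ ≤ Finset.univ.card := Finset.card_le_card_of_surjOn ℓ hsurj
    _ = Fintype.card ν := Finset.card_univ

end OddBelowOccupied

namespace Bn

variable {n : ℕ}

def ReachesLevels (n : ℕ) (f : Fin (n + 1) → ℕ) : Prop :=
  ∃ L : Fin (n + 1) → Fin (2 * n + 1), (Bn n).RReachable L ∧ ∀ j, (L j : ℕ) = f j

theorem ReachesLevels.broadcast_a {k : ℕ} (hk : k < n)
    (h : ReachesLevels n fun j => min (2 * k) (2 * (n - j) + 1)) :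
    ReachesLevels n fun j => min (2 * k + 1) (2 * (n - j) + 1) := by
  obtain ⟨L, hL, hLval⟩ := h
  dsimp only at hLval
  refine ⟨fun j => if (L j : ℕ) = 2 * k then ⟨2 * k + 1, by omega⟩ else L j,
    hL.of_forall_eq_or_br fun j => ?_, fun j => ?_⟩
  · by_cases hj : (L j : ℕ) = 2 * k
    · exact Or.inr ⟨.inl ⟨k, hk⟩, hj, by simp [hj]⟩
    · exact Or.inl (by simp [hj])
  · have := hLval j
    by_cases hj : (L j : ℕ) = 2 * k <;> simp only [hj, if_true, if_false] <;> omega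

/-- Node `n - k` broadcasts `b_{k+1}` to everybody and stays behind in `q_{2k+1}`. -/
theorem ReachesLevels.broadcast_b {k : ℕ} (hk : k < n)
    (h : ReachesLevels n fun j => min (2 * k + 1) (2 * (n - j) + 1)) :
    ReachesLevels n fun j => min (2 * (k + 1)) (2 * (n - j) + 1) := by
  obtain ⟨L, hL, hLval⟩ := h
  dsimp only at hLval
  let σ : Fin (n + 1) := ⟨n - k, by omega⟩
  let m : Fin n ⊕ Fin n := .inr ⟨k, hk⟩
  have hσ : (L σ : ℕ) = 2 * k + 1 := by simp only [hLval, σ]; omega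
  refine ⟨fun j => if j = σ then L σ else BnRcvF n (L j) m,
    hL.step ⊤ σ m ⟨hσ, by simp⟩ fun j hj => ⟨fun _ => by simp [hj, Bn], fun h => (h hj.symm).elim⟩,
    fun j => ?_⟩
  have hj := hLval j
  by_cases hjσ : j = σ
  · simp only [hjσ, if_true, hσ, σ]
    omega
  · have hjσ' : (j : ℕ) ≠ n - k := fun h => hjσ (Fin.ext h)
    simp only [hjσ, if_false, BnRcvF, m]
    split_ifs
    · show 2 * k + 2 = _
      omega
    · omega

theorem reachesLevels_round {k : ℕ} (hk : k ≤ n) :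
    ReachesLevels n fun j => min (2 * k) (2 * (n - j) + 1) := by
  induction k with
  | zero => exact ⟨fun _ => 0,
      BroadcastProtocol.rReachable_of_forall_mem_I fun _ => Finset.mem_singleton_self 0,
      fun _ => by simp⟩
  | succ k ih => exact (ReachesLevels.broadcast_a hk (ih (by omega))).broadcast_b hk

theorem exists_covers : ∃ (r : ℕ) (ρ : RExec (Bn n) (Fin (n + 1)) r), ρ.Covers {BnSmiley n} := by
  obtain ⟨L, ⟨r, ρ, hρ⟩, hLval⟩ := reachesLevels_round le_rfl
  refine ⟨r, ρ, 0, ?_⟩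
  rw [hρ, Set.mem_singleton_iff]
  exact Fin.ext (by simpa [BnSmiley] using hLval 0)

theorem br_cases {q q' : Fin (2 * n + 1)} {m : Fin n ⊕ Fin n} (h : (Bn n).br q m q') :
    (Even (q : ℕ) ∧ (q' : ℕ) = q + 1) ∨ q' = q := by
  rcases m with i | i
  · obtain ⟨hq, hq'⟩ : (q : ℕ) = 2 * i ∧ (q' : ℕ) = 2 * i + 1 := h
    exact Or.inl ⟨⟨i, by omega⟩, by omega⟩
  · exact Or.inr h.2

theorem rcvF_cases (q : Fin (2 * n + 1)) (m : Fin n ⊕ Fin n) :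
    BnRcvF n q m = q ∨
      ∃ i : Fin n, m = .inr i ∧ (q : ℕ) = 2 * i + 1 ∧ (BnRcvF n q m : ℕ) = q + 1 := by
  rcases m with i | i
  · exact Or.inl rfl
  · by_cases hq : (q : ℕ) = 2 * i + 1
    · exact Or.inr ⟨i, rfl, hq, by simp [BnRcvF, hq]⟩
    · exact Or.inl (by simp [BnRcvF, hq])

variable {ν : Type} [Fintype ν] [DecidableEq ν] {r : ℕ}

theorem lab_succ_cases (ρ : RExec (Bn n) ν r) (s : Fin r) (v : ν) :
    (ρ.lab s.succ v : ℕ) = ρ.lab s.castSucc v ∨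
      (Even (ρ.lab s.castSucc v : ℕ) ∧ (ρ.lab s.succ v : ℕ) = ρ.lab s.castSucc v + 1) ∨
      ((ρ.lab s.succ v : ℕ) = ρ.lab s.castSucc v + 1 ∧
        (ρ.lab s.succ (ρ.sender s) : ℕ) = ρ.lab s.castSucc v) := by
  by_cases hv : v = ρ.sender s
  · subst hv
    rcases br_cases (ρ.step_br s) with h | h
    · exact Or.inr (Or.inl h)
    · exact Or.inl (congrArg Fin.val h)
  obtain ⟨hrcv, hstay⟩ := ρ.step_rcv s v hv
  by_cases hE : ρ.edges s.castSucc (ρ.sender s) v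
  · have hv' : ρ.lab s.succ v = BnRcvF n (ρ.lab s.castSucc v) (ρ.msg s) := hrcv hE
    rcases rcvF_cases (ρ.lab s.castSucc v) (ρ.msg s) with h | ⟨i, hmsg, hq, hq'⟩
    · exact Or.inl (by rw [hv', h])
    · have hσ := ρ.step_br s
      rw [hmsg] at hσ
      obtain ⟨hσ₁, hσ₂⟩ : _ ∧ _ = _ := hσ
      exact Or.inr (Or.inr ⟨hv' ▸ hq', by rw [hσ₂, hσ₁, hq]⟩)
  · exact Or.inl (by rw [hstay hE])

theorem oddBelowOccupied_lab (ρ : RExec (Bn n) ν r) (t : Fin (r + 1)) :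
    OddBelowOccupied fun v => (ρ.lab t v : ℕ) := by
  induction t using Fin.induction with
  | zero =>
    intro v k hv
    have h0 : ρ.lab 0 v = 0 := Finset.mem_singleton.mp (ρ.init v)
    simp [h0] at hv
  | succ s ih => exact ih.of_step (ρ.sender s) (lab_succ_cases ρ s)

theorem card_le_of_covers {ρ : RExec (Bn n) ν r} (h : ρ.Covers {BnSmiley n}) :
    n + 1 ≤ Fintype.card ν := by
  obtain ⟨v, hv⟩ := h
  exact (oddBelowOccupied_lab ρ (Fin.last r)).card_le (v := v)
    (by rw [RExec.lastLab, Set.mem_singleton_iff] at hv; simp [hv, BnSmiley])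

end Bn

theorem cutoff_linear_lower_bound_general (n : ℕ) :
    (∃ (k r : ℕ) (ρ : RExec (Bn n) (Fin k) r), ρ.Covers {BnSmiley n}) ∧
    (∀ (ν : Type) [Fintype ν] [DecidableEq ν] (r : ℕ) (ρ : RExec (Bn n) ν r),
      ρ.Covers {BnSmiley n} → n + 1 ≤ Fintype.card ν) ∧
    (∀ (ν : Type) [Fintype ν] [DecidableEq ν] (r : ℕ) (ρ : LExec (Bn n) ν r),
      ρ.Covers {BnSmiley n} → n + 1 ≤ Fintype.card ν) :=
  ⟨⟨n + 1, Bn.exists_covers⟩, fun _ _ _ _ _ h => Bn.card_le_of_covers h,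
    fun _ _ _ _ _ h => Bn.card_le_of_covers h.toRExec⟩

/-- **Linear lower bound on the cutoff.** For every `n ≥ 1`, some reconfigurable
execution of `B_n` covers `{☺}`, every reconfigurable execution of `B_n` covering
`{☺}` has at least `n + 1` nodes, and (since every lossy execution induces a
reconfigurable one) every lossy execution of `B_n` covering `{☺}` also has at least
`n + 1` nodes. -/
theorem cutoff_linear_lower_bound (n : ℕ) (hn : 1 ≤ n) :
    (∃ (k r : ℕ) (ρ : RExec (Bn n) (Fin k) r), ρ.Covers {BnSmiley n}) ∧
    (∀ (ν : Type) [Fintype ν] [DecidableEq ν] (r : ℕ) (ρ : RExec (Bn n) ν r),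
      ρ.Covers {BnSmiley n} → n + 1 ≤ Fintype.card ν) ∧
    (∀ (ν : Type) [Fintype ν] [DecidableEq ν] (r : ℕ) (ρ : LExec (Bn n) ν r),
      ρ.Covers {BnSmiley n} → n + 1 ≤ Fintype.card ν) :=
  cutoff_linear_lower_bound_general n
end

section
/- Quadratic lower bound on the covering length: for every n ≥ 1, every reconfigurable execution of the broadcast protocol B_n covering {☺} has length at least (n² + 5n)/2. Since every lossy execution induces a reconfigurable one of the same length, the same lower bound holds for every lossy execution of B_n covering {☺}. -/
/-!
Every state change of a node of `B_n` moves it one level up: from `q_{2j}` to `q_{2j+1}` by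
broadcasting `a_j` itself, or from `q_{2j+1}` to `q_{2j+2}` by receiving `b_j`. So the nodes
ever reaching `q_{2j+1}` are all distinct senders of `a_j`. Among the nodes reaching `q_{2j+2}`,
look at the last step at which one of them enters it: its sender broadcasts `b_j` from
`q_{2j+1}` and stays there, hence reaches `q_{2j+1}` but never `q_{2j+2}`. Thus at least one
more node reaches `q_{2j+1}` than `q_{2j+2}`, and downward from the node covering `☺ = q_{2n}`
at least `n - j + 1` nodes reach `q_{2j+1}`. Summing `n - j + 1` copies of `a_j` and one `b_j`
over `j < n` gives `(n² + 5n) / 2` broadcasts.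
-/

open Finset

theorem Fin.exists_castSucc_lt_le_succ {α : Type*} [LinearOrder α] {r : ℕ}
    (f : Fin (r + 1) → α) {a : α} (h0 : f 0 < a) {t : Fin (r + 1)} (ht : a ≤ f t) :
    ∃ i : Fin r, f i.castSucc < a ∧ a ≤ f i.succ := by
  induction t using Fin.induction with
  | zero => exact absurd ht (not_le.2 h0)
  | succ i ih =>
    by_cases h : a ≤ f i.castSucc
    · exact ih h
    · exact ⟨i, not_le.1 h, ht⟩

theorem sum_sub_add_one_mul_two (n : ℕ) :
    (∑ j : Fin n, (n - j + 1)) * 2 + 2 * n = n ^ 2 + 5 * n := by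
  induction n with
  | zero => simp
  | succ n ih =>
    rw [Fin.sum_univ_succ]
    simp only [Fin.val_zero, Fin.val_succ, Nat.add_sub_add_right, Nat.sub_zero]
    linear_combination ih

section Lossy

variable {Q M : Type} [Fintype Q] [DecidableEq Q] [Fintype M] {P : BroadcastProtocol Q M}
  {ν : Type} [Fintype ν] [DecidableEq ν] {r : ℕ}

/-- The topology before a delivered broadcast is `E`; before a lost one it is empty. -/
def LExec.toRExec_s12 (ρ : LExec P ν r) : RExec P ν r where
  lab := ρ.lab
  edges t x y := ρ.E x y ∧ ∀ i : Fin r, i.castSucc = t → ρ.lost i = false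
  edges_symm _ _ _ h := ⟨ρ.E_symm h.1, h.2⟩
  edges_irrefl _ x h := ρ.E_irrefl x h.1
  sender := ρ.sender
  msg := ρ.msg
  init := ρ.init
  step_br := ρ.step_br
  step_rcv i v hv := by
    cases hl : ρ.lost i
    · obtain ⟨hrcv, hkeep⟩ := ρ.step_real i hl v hv
      exact ⟨fun he => hrcv he.1,
        fun he => hkeep fun hE => he ⟨hE, fun i' h => Fin.castSucc_injective r h ▸ hl⟩⟩
    · exact ⟨fun he => absurd (he.2 i rfl) (by simp [hl]), fun _ => ρ.step_lost i hl v hv⟩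

end Lossy

namespace RExec

variable {n : ℕ} {ν : Type} [Fintype ν] [DecidableEq ν] {r : ℕ} (ρ : RExec (Bn n) ν r)

theorem lab_zero_val (v : ν) : (ρ.lab 0 v : ℕ) = 0 := by
  rw [Finset.mem_singleton.1 (ρ.init v)]
  rfl

theorem lab_succ_cases (i : Fin r) (v : ν) :
    (ρ.lab i.succ v : ℕ) = ρ.lab i.castSucc v ∨
    (∃ j : Fin n, (ρ.lab i.castSucc v : ℕ) = 2 * j ∧ (ρ.lab i.succ v : ℕ) = 2 * j + 1 ∧
      ρ.sender i = v ∧ ρ.msg i = .inl j) ∨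
    (∃ j : Fin n, (ρ.lab i.castSucc v : ℕ) = 2 * j + 1 ∧
      (ρ.lab i.succ v : ℕ) = 2 * j + 2 ∧ ρ.msg i = .inr j ∧ (ρ.lab i.succ (ρ.sender i) : ℕ) = 2 * j + 1) := by
  have hbr : BnBr n _ (ρ.msg i) _ := ρ.step_br i
  by_cases hv : ρ.sender i = v
  · subst hv
    rcases hm : ρ.msg i with j | j <;> rw [hm] at hbr
    · exact .inr (.inl ⟨j, hbr.1, hbr.2, rfl, rfl⟩)
    · exact .inl (congrArg _ hbr.2)
  · obtain ⟨hrcv, hkeep⟩ := ρ.step_rcv i v (Ne.symm hv)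
    by_cases he : ρ.edges i.castSucc (ρ.sender i) v
    · have hq : ρ.lab i.succ v = BnRcvF n _ (ρ.msg i) := hrcv he
      rcases hm : ρ.msg i with j | j <;> rw [hm] at hbr hq
      · exact .inl (congrArg _ hq)
      · simp only [BnRcvF] at hq
        split_ifs at hq with hodd
        · exact .inr (.inr ⟨j, hodd, by rw [hq], rfl, hbr.2 ▸ hbr.1⟩)
        · exact .inl (congrArg _ hq)
    · exact .inl (congrArg _ (hkeep he))

theorem lab_val_monotone (v : ν) : Monotone fun t => (ρ.lab t v : ℕ) :=
  Fin.monotone_iff_le_succ.2 fun i => by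
    rcases ρ.lab_succ_cases i v with h | ⟨j, h₁, h₂, -⟩ | ⟨j, h₁, h₂, -⟩ <;> omega

theorem lab_le_lastLab (t : Fin (r + 1)) (v : ν) : (ρ.lab t v : ℕ) ≤ ρ.lastLab v :=
  ρ.lab_val_monotone v (Fin.le_last t)

/-- By monotonicity of the levels, these are the nodes that ever reach level `m`. -/
def reached (m : ℕ) : Finset ν := {v | m ≤ (ρ.lastLab v : ℕ)}

theorem mem_reached {m : ℕ} {v : ν} : v ∈ ρ.reached m ↔ m ≤ (ρ.lastLab v : ℕ) := by
  simp [reached]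

theorem reached_anti : Antitone ρ.reached := fun _ _ h _ hv =>
  ρ.mem_reached.2 (h.trans (ρ.mem_reached.1 hv))

theorem reached_nonempty (hcov : ρ.Covers {BnSmiley n}) {m : ℕ} (hm : m ≤ 2 * n) :
    (ρ.reached m).Nonempty := by
  obtain ⟨v, hv⟩ := hcov
  exact ⟨v, ρ.mem_reached.2 (by rwa [Set.mem_singleton_iff.1 hv])⟩

theorem exists_crossing {m : ℕ} (hm : 0 < m) {v : ν} (hv : v ∈ ρ.reached m) :
    ∃ i : Fin r, (ρ.lab i.castSucc v : ℕ) < m ∧ m ≤ (ρ.lab i.succ v : ℕ) :=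
  Fin.exists_castSucc_lt_le_succ (fun t => (ρ.lab t v : ℕ)) (by simpa [lab_zero_val])
    (ρ.mem_reached.1 hv)

theorem sender_msg_of_crossing_odd {i : Fin r} {v : ν} {j : Fin n}
    (h : (ρ.lab i.castSucc v : ℕ) < 2 * j + 1 ∧ 2 * j + 1 ≤ (ρ.lab i.succ v : ℕ)) :
    ρ.sender i = v ∧ ρ.msg i = .inl j := by
  rcases ρ.lab_succ_cases i v with h' | ⟨j', h₁, h₂, hs, hm⟩ | ⟨j', h₁, h₂, -⟩
  · omega
  · obtain rfl : j' = j := Fin.ext (by omega)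
    exact ⟨hs, hm⟩
  · omega

theorem msg_of_crossing_even {i : Fin r} {v : ν} {j : Fin n}
    (h : (ρ.lab i.castSucc v : ℕ) < 2 * j + 2 ∧ 2 * j + 2 ≤ (ρ.lab i.succ v : ℕ)) :
    ρ.msg i = .inr j ∧ (ρ.lab i.succ (ρ.sender i) : ℕ) = 2 * j + 1 := by
  rcases ρ.lab_succ_cases i v with h' | ⟨j', h₁, h₂, -⟩ | ⟨j', h₁, h₂, hm, hs⟩
  · omega
  · omega
  · obtain rfl : j' = j := Fin.ext (by omega)
    exact ⟨hm, hs⟩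

theorem card_reached_le_card_inl (j : Fin n) :
    #(ρ.reached (2 * j + 1)) ≤ #{i | ρ.msg i = .inl j} :=
  calc #(ρ.reached (2 * j + 1))
      ≤ #(({i | ρ.msg i = .inl j} : Finset (Fin r)).image ρ.sender) := by
        refine card_le_card fun v hv => ?_
        obtain ⟨i, hi⟩ := ρ.exists_crossing (by omega) hv
        obtain ⟨hs, hm⟩ := ρ.sender_msg_of_crossing_odd hi
        exact mem_image.2 ⟨i, by simpa using hm, hs⟩
    _ ≤ _ := card_image_le

theorem card_inr_pos {j : Fin n} (hne : (ρ.reached (2 * j + 2)).Nonempty) :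
    0 < #{i | ρ.msg i = .inr j} := by
  obtain ⟨v, hv⟩ := hne
  obtain ⟨i, hi⟩ := ρ.exists_crossing (by omega) hv
  exact card_pos.2 ⟨i, by simpa using (ρ.msg_of_crossing_even hi).1⟩

theorem card_reached_lt {j : Fin n} (hne : (ρ.reached (2 * j + 2)).Nonempty) :
    #(ρ.reached (2 * j + 2)) < #(ρ.reached (2 * j + 1)) := by
  let T : Finset (Fin r) :=
    {i | ∃ v, (ρ.lab i.castSucc v : ℕ) < 2 * j + 2 ∧ 2 * j + 2 ≤ (ρ.lab i.succ v : ℕ)}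
  have hT : T.Nonempty := by
    obtain ⟨v, hv⟩ := hne
    obtain ⟨i, hi⟩ := ρ.exists_crossing (by omega) hv
    exact ⟨i, by simpa [T] using ⟨v, hi⟩⟩
  obtain ⟨i, hiT, hmax⟩ := T.exists_max_image id hT
  obtain ⟨u, hu⟩ := (mem_filter.1 hiT).2
  have hs := (ρ.msg_of_crossing_even hu).2
  refine card_lt_card ((ssubset_iff_of_subset (ρ.reached_anti (by omega))).2
    ⟨ρ.sender i, ?_, fun hmem => ?_⟩)
  · exact ρ.mem_reached.2 (hs ▸ ρ.lab_le_lastLab i.succ _)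
  · obtain ⟨i', hi'⟩ := ρ.exists_crossing (by omega) hmem
    have hlt : i.succ < i'.succ := (ρ.lab_val_monotone _).reflect_lt
      (show (ρ.lab i.succ (ρ.sender i) : ℕ) < ρ.lab i'.succ (ρ.sender i) by omega)
    exact (hmax i' (by simpa [T] using ⟨_, hi'⟩)).not_gt (Fin.succ_lt_succ_iff.1 hlt)

theorem succ_le_card_reached (hcov : ρ.Covers {BnSmiley n}) :
    ∀ k j, j + k = n → k + 1 ≤ #(ρ.reached (2 * j))
  | 0, _, rfl => card_pos.2 (ρ.reached_nonempty hcov le_rfl)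
  | k + 1, j, h => by
    have ih : k + 1 ≤ #(ρ.reached (2 * j + 2)) :=
      succ_le_card_reached hcov k (j + 1) (by omega)
    have hlt : #(ρ.reached (2 * j + 2)) < #(ρ.reached (2 * j + 1)) :=
      ρ.card_reached_lt (j := ⟨j, by omega⟩) (ρ.reached_nonempty hcov (by omega))
    have hle := card_le_card (ρ.reached_anti (show 2 * j ≤ 2 * j + 1 by omega))
    omega

theorem le_card_inl (hcov : ρ.Covers {BnSmiley n}) (j : Fin n) :
    n - j + 1 ≤ #{i | ρ.msg i = .inl j} := by
  have h := ρ.succ_le_card_reached hcov (n - j - 1) (j + 1) (by omega)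
  rw [mul_add, mul_one] at h
  have hlt := ρ.card_reached_lt (j := j) (ρ.reached_nonempty hcov (by omega))
  have := ρ.card_reached_le_card_inl j
  omega

theorem quadratic_le_length (hcov : ρ.Covers {BnSmiley n}) : (n ^ 2 + 5 * n) / 2 ≤ r := by
  have hr : r = ∑ j, #{i | ρ.msg i = .inl j} + ∑ j, #{i | ρ.msg i = .inr j} := by
    simpa [Fintype.sum_sum_type] using
      card_eq_sum_card_fiberwise (f := ρ.msg) (s := univ) (t := univ) fun i _ => mem_univ _
  have ha := sum_le_sum fun j (_ : j ∈ univ) => ρ.le_card_inl hcov j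
  have hb : n ≤ ∑ j, #{i | ρ.msg i = .inr j} := by
    simpa using sum_le_sum fun j (_ : j ∈ univ) =>
      Nat.succ_le_of_lt (ρ.card_inr_pos (j := j) (ρ.reached_nonempty hcov (by omega)))
  rw [← sum_sub_add_one_mul_two]
  omega

end RExec

theorem covering_length_quadratic_lower_bound_general (n : ℕ) :
    (∀ (ν : Type) [Fintype ν] [DecidableEq ν] (r : ℕ) (ρ : RExec (Bn n) ν r),
      ρ.Covers {BnSmiley n} → (n ^ 2 + 5 * n) / 2 ≤ r) ∧
    (∀ (ν : Type) [Fintype ν] [DecidableEq ν] (r : ℕ) (ρ : LExec (Bn n) ν r),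
      ρ.Covers {BnSmiley n} → (n ^ 2 + 5 * n) / 2 ≤ r) :=
  ⟨fun _ _ _ _ ρ hcov => ρ.quadratic_le_length hcov,
    fun _ _ _ _ ρ hcov => ρ.toRExec_s12.quadratic_le_length hcov⟩

/-- **Quadratic lower bound on the covering length.** For every `n ≥ 1`, every
reconfigurable execution of `B_n` covering `{☺}` has length at least
`(n² + 5n) / 2`, and (since every lossy execution induces a reconfigurable one of
the same length) so does every lossy execution of `B_n` covering `{☺}`. -/
theorem covering_length_quadratic_lower_bound (n : ℕ) (hn : 1 ≤ n) :
    (∀ (ν : Type) [Fintype ν] [DecidableEq ν] (r : ℕ) (ρ : RExec (Bn n) ν r),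
      ρ.Covers {BnSmiley n} → (n ^ 2 + 5 * n) / 2 ≤ r) ∧
    (∀ (ν : Type) [Fintype ν] [DecidableEq ν] (r : ℕ) (ρ : LExec (Bn n) ν r),
      ρ.Covers {BnSmiley n} → (n ^ 2 + 5 * n) / 2 ≤ r) :=
  covering_length_quadratic_lower_bound_general n
end
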